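/- arXiv:math/0206064 — 5 statements merged into one kernel-verified Lean document; each statement's English description precedes it below -/
import Mathlib

section
/- Let dim H = n ≥ 2. If ω ∈ S²H*⊗Λ²V* is nondegenerate of rank 4n−2, then every σ ∈ Λ²H⊗S²V with σ̃∘ω̃ = 0 satisfies σ = 0. (This is the content of the paper's Proposition that M(n,2n−2), the set of nondegenerate tensors of rank 4n−2 in S²H*⊗Λ²V*, is smooth of codimension 1.) -/
open TensorProduct Module

private lemma aux_par_exists {k V : Type} [Field k] [AddCommGroup V] [Module k V]
    (u w : V) (h : ∀ z z' : Module.Dual k V, z u * z' w = z w * z' u) :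
    u = 0 ∨ ∃ t : k, w = t • u := by
  by_cases hu : u = 0
  · exact Or.inl hu
  · right
    have h1 : ¬ ∀ z : Module.Dual k V, z u = 0 := by
      rw [Module.forall_dual_apply_eq_zero_iff k u]; exact hu
    push_neg at h1
    obtain ⟨z1, hz1⟩ := h1
    refine ⟨z1 w / z1 u, ?_⟩
    rw [← sub_eq_zero, ← Module.forall_dual_apply_eq_zero_iff k]
    intro z
    have key := h z1 z
    simp only [map_sub, map_smul, smul_eq_mul]
    field_simp
    linear_combination key

set_option maxHeartbeats 2000000 in
/-- For `dim H = n ≥ 2` and a nondegenerate `ω ∈ S²H*⊗Λ²V*` of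
rank `4n-2`, every `σ ∈ Λ²H⊗S²V` with `σ̃ ∘ ω̃ = 0` vanishes.  This is the
content of the Proposition that `M(n, 2n-2)` is smooth of codimension 1. -/
theorem statement2
    (n : ℕ) (hn : 2 ≤ n)
    (k : Type) [Field k] [IsAlgClosed k] [CharZero k]
    (V H : Type) [AddCommGroup V] [Module k V] [AddCommGroup H] [Module k H]
    [FiniteDimensional k V] [FiniteDimensional k H]
    (hV : finrank k V = 4) (hH : finrank k H = n)
    (φ : H →ₗ[k] H →ₗ[k] V →ₗ[k] V →ₗ[k] k)
    (hφsymm : ∀ h h' : H, φ h h' = φ h' h)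
    (hφalt : ∀ (h h' : H) (v : V), φ h h' v v = 0)
    (W : H ⊗[k] V →ₗ[k] Dual k (H ⊗[k] V))
    (hW : ∀ (h h' : H) (v v' : V), W (h ⊗ₜ v) (h' ⊗ₜ v') = φ h h' v v')
    (hrank : finrank k (LinearMap.range W) = 4 * n - 2)
    (hnd : ∀ h : H, h ≠ 0 → ∀ v : V, v ≠ 0 → W (h ⊗ₜ[k] v) ≠ 0)
    (ψ : Dual k H →ₗ[k] Dual k H →ₗ[k] Dual k V →ₗ[k] Dual k V →ₗ[k] k)
    (hψalt : ∀ ξ : Dual k H, ψ ξ ξ = 0)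
    (hψsymm : ∀ (ξ ξ' : Dual k H) (z z' : Dual k V), ψ ξ ξ' z z' = ψ ξ ξ' z' z)
    (S : Dual k (H ⊗[k] V) →ₗ[k] H ⊗[k] V)
    (hS : ∀ (ξ ξ' : Dual k H) (z z' : Dual k V),
      dualDistrib k H V (ξ' ⊗ₜ z') (S (dualDistrib k H V (ξ ⊗ₜ z))) = ψ ξ ξ' z z')
    (hcomp : S ∘ₗ W = 0) :
    ψ = 0 := by
  classical
  -- surjectivity of dualDistrib
  have hdd_surj : Function.Surjective ⇑(dualDistrib k H V) := by
    intro f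
    refine ⟨TensorProduct.dualDistribInvOfBasis (Module.finBasis k H) (Module.finBasis k V) f, ?_⟩
    have h := TensorProduct.dualDistrib_dualDistribInvOfBasis_left_inverse
      (Module.finBasis k H) (Module.finBasis k V)
    simpa using LinearMap.congr_fun h f
  -- W is antisymmetric
  have hWa : ∀ x y : H ⊗[k] V, W x y = - W y x := by
    have hφa : ∀ (h h' : H) (v v' : V), φ h h' v v' = - φ h h' v' v := by
      intro h h' v v'
      have h0 := hφalt h h' (v + v')
      simp only [map_add, LinearMap.add_apply] at h0
      have h1 := hφalt h h' v
      have h2 := hφalt h h' v'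
      linear_combination h0 - h1 - h2
    have key : W + W.flip = 0 := by
      apply TensorProduct.ext'
      intro h v
      apply TensorProduct.ext'
      intro h' v'
      simp only [LinearMap.add_apply, LinearMap.flip_apply, LinearMap.zero_apply, hW]
      rw [hφsymm h' h]
      linear_combination hφa h h' v v'
    intro x y
    have h0 := LinearMap.congr_fun (LinearMap.congr_fun key x) y
    simp only [LinearMap.add_apply, LinearMap.flip_apply, LinearMap.zero_apply] at h0
    linear_combination h0
  -- ψ antisymmetric in the H-arguments (pointwise)
  have hψanti : ∀ (ξ ξ' : Dual k H) (z z' : Dual k V), ψ ξ' ξ z z' = - ψ ξ ξ' z z' := by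
    intro ξ ξ' z z'
    have h0 : ψ (ξ + ξ') (ξ + ξ') z z' = 0 := by rw [hψalt]; simp
    have h1 : ψ ξ ξ z z' = 0 := by rw [hψalt]; simp
    have h2 : ψ ξ' ξ' z z' = 0 := by rw [hψalt]; simp
    simp only [map_add, LinearMap.add_apply] at h0
    linear_combination h0 - h1 - h2
  -- S is antisymmetric
  have hSa : ∀ f g : Dual k (H ⊗[k] V), g (S f) + f (S g) = 0 := by
    have key : ∀ t s : Dual k H ⊗[k] Dual k V,
        (dualDistrib k H V) s (S ((dualDistrib k H V) t))
          + (dualDistrib k H V) t (S ((dualDistrib k H V) s)) = 0 := by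
      intro t s
      induction t using TensorProduct.induction_on with
      | zero => simp
      | tmul ξ z =>
        induction s using TensorProduct.induction_on with
        | zero => simp
        | tmul ξ' z' =>
          rw [hS ξ ξ' z z', hS ξ' ξ z' z]
          linear_combination hψanti ξ ξ' z' z + hψsymm ξ ξ' z z'
        | add s1 s2 ih1 ih2 =>
          simp only [map_add, LinearMap.add_apply] at *
          linear_combination ih1 + ih2
      | add t1 t2 ih1 ih2 =>
        simp only [map_add, LinearMap.add_apply] at *
        linear_combination ih1 + ih2
    intro f g
    obtain ⟨t, rfl⟩ := hdd_surj f
    obtain ⟨s, rfl⟩ := hdd_surj g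
    exact key t s
  -- W ∘ S = 0
  have hWS : ∀ f : Dual k (H ⊗[k] V), W (S f) = 0 := by
    intro f
    apply LinearMap.ext
    intro y
    have h1 := hSa f (W y)
    have h2 : S (W y) = 0 := by simpa using LinearMap.congr_fun hcomp y
    rw [h2] at h1
    simp only [map_zero] at h1
    have h3 := hWa (S f) y
    simp only [LinearMap.zero_apply]
    linear_combination h3 - h1
  -- dimension count
  have hdim : finrank k (H ⊗[k] V) = 4 * n := by
    rw [Module.finrank_tensorProduct, hH, hV]; ring
  have hker : finrank k (LinearMap.ker W) = 2 := by
    have h1 := LinearMap.finrank_range_add_finrank_ker W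
    rw [hrank, hdim] at h1
    omega
  by_cases hS0 : S = 0
  · ext ξ ξ' z z'
    rw [← hS ξ ξ' z z', hS0]
    simp
  · exfalso
    -- basis of the 2-dimensional kernel of W
    have c : Basis (Fin 2) k ↥(LinearMap.ker W) :=
      Module.finBasisOfFinrankEq k ↥(LinearMap.ker W) hker
    set a0 : H ⊗[k] V := ↑(c 0) with ha0def
    set b0 : H ⊗[k] V := ↑(c 1) with hb0def
    obtain ⟨e1, he1⟩ := LinearMap.exists_extend (c.coord 0)
    obtain ⟨e2, he2⟩ := LinearMap.exists_extend (c.coord 1)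
    have he1a : e1 a0 = 1 := by
      have h := LinearMap.congr_fun he1 (c 0)
      rw [LinearMap.comp_apply, Basis.coord_apply, Basis.repr_self_apply] at h
      simpa using h
    have he1b : e1 b0 = 0 := by
      have h := LinearMap.congr_fun he1 (c 1)
      rw [LinearMap.comp_apply, Basis.coord_apply, Basis.repr_self_apply] at h
      simpa using h
    have he2a : e2 a0 = 0 := by
      have h := LinearMap.congr_fun he2 (c 0)
      rw [LinearMap.comp_apply, Basis.coord_apply, Basis.repr_self_apply] at h
      simpa using h
    have he2b : e2 b0 = 1 := by
      have h := LinearMap.congr_fun he2 (c 1)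
      rw [LinearMap.comp_apply, Basis.coord_apply, Basis.repr_self_apply] at h
      simpa using h
    -- expansion of kernel elements
    have hexp : ∀ u : H ⊗[k] V, u ∈ LinearMap.ker W → u = e1 u • a0 + e2 u • b0 := by
      intro u hu
      have h1 := c.sum_repr ⟨u, hu⟩
      rw [Fin.sum_univ_two] at h1
      have h2 : e1 u = c.repr ⟨u, hu⟩ 0 := by
        have h := LinearMap.congr_fun he1 ⟨u, hu⟩
        rw [LinearMap.comp_apply, Basis.coord_apply] at h
        simpa using h
      have h3 : e2 u = c.repr ⟨u, hu⟩ 1 := by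
        have h := LinearMap.congr_fun he2 ⟨u, hu⟩
        rw [LinearMap.comp_apply, Basis.coord_apply] at h
        simpa using h
      have h4 := congrArg (Submodule.subtype (LinearMap.ker W)) h1
      simp only [map_add, map_smul, Submodule.coe_subtype] at h4
      rw [h2, h3]
      exact h4.symm
    have hSmem : ∀ f : Dual k (H ⊗[k] V), S f ∈ LinearMap.ker W :=
      fun f => LinearMap.mem_ker.mpr (hWS f)
    -- explicit form of S
    have hp1 : e1 (S e1) = 0 := by
      have h := hSa e1 e1; linear_combination h / 2
    have hq2 : e2 (S e2) = 0 := by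
      have h := hSa e2 e2; linear_combination h / 2
    have hq1 : e1 (S e2) = - e2 (S e1) := by
      have h := hSa e2 e1; linear_combination h
    set μ := e2 (S e1) with hμdef
    have hSe1 : S e1 = μ • b0 := by
      have h := hexp (S e1) (hSmem e1)
      rw [hp1] at h
      simpa using h
    have hSe2 : S e2 = (-μ) • a0 := by
      have h := hexp (S e2) (hSmem e2)
      rw [hq1, hq2] at h
      simpa using h
    have hSform : ∀ f : Dual k (H ⊗[k] V), S f = (- f (S e1)) • a0 + (- f (S e2)) • b0 := by
      intro f
      have h1 := hexp (S f) (hSmem f)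
      have h2 : e1 (S f) = - f (S e1) := by
        have h := hSa f e1; linear_combination h
      have h3 : e2 (S f) = - f (S e2) := by
        have h := hSa f e2; linear_combination h
      rw [h2, h3] at h1
      exact h1
    have hSfin : ∀ f : Dual k (H ⊗[k] V),
        S f = (μ * f a0) • b0 - (μ * f b0) • a0 := by
      intro f
      rw [hSform f, hSe1, hSe2]
      simp only [map_smul, smul_eq_mul]
      module
    have hμ0 : μ ≠ 0 := by
      intro h0
      apply hS0
      apply LinearMap.ext
      intro f
      rw [hSfin f, h0]
      simp
    -- independence of a0 and b0
    have hind : ∀ s t : k, s • a0 + t • b0 = 0 → s = 0 ∧ t = 0 := by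
      intro s t hst
      have h1 : s • (c 0) + t • (c 1) = (0 : ↥(LinearMap.ker W)) := by
        apply Subtype.ext
        simpa [ha0def, hb0def] using hst
      have hli := c.linearIndependent
      rw [Fintype.linearIndependent_iff] at hli
      have h2 := hli ![s, t] (by
        rw [Fin.sum_univ_two]
        simpa using h1)
      exact ⟨h2 0, h2 1⟩
    have hb0 : b0 ≠ 0 := by
      intro h
      have := (hind 0 1 (by simp [h])).2
      exact one_ne_zero this
    -- the decomposable form of S
    set a : H ⊗[k] V := b0 with hadef
    set b : H ⊗[k] V := (-μ) • a0 with hbdef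
    have hSab : ∀ f : Dual k (H ⊗[k] V), S f = f a • b - f b • a := by
      intro f
      rw [hSfin f, hbdef, hadef]
      simp only [map_smul, smul_eq_mul]
      module
    -- the contraction map Φ
    set Φ : H ⊗[k] V →ₗ[k] (Dual k H →ₗ[k] V) :=
      (dualTensorHom k (Dual k H) V) ∘ₗ (LinearMap.rTensor V (Module.evalEquiv k H).toLinearMap)
      with hΦdef
    have hΦpure : ∀ (h : H) (v : V) (ξ : Dual k H), Φ (h ⊗ₜ v) ξ = ξ h • v := by
      intro h v ξ
      simp [hΦdef, LinearMap.rTensor_tmul, dualTensorHom_apply, Module.Dual.eval_apply]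
    have hbridge : ∀ (ξ : Dual k H) (z : Dual k V) (x : H ⊗[k] V),
        dualDistrib k H V (ξ ⊗ₜ z) x = z (Φ x ξ) := by
      intro ξ z x
      induction x using TensorProduct.induction_on with
      | zero => simp
      | tmul h v =>
        rw [hΦpure, TensorProduct.dualDistrib_apply]
        simp [smul_eq_mul]
      | add x y ihx ihy =>
        simp only [map_add, LinearMap.add_apply, ihx, ihy]
    have hΦ0 : ∀ x : H ⊗[k] V, (∀ ξ : Dual k H, Φ x ξ = 0) → x = 0 := by
      intro x hx
      rw [← Module.forall_dual_apply_eq_zero_iff k x]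
      intro f
      obtain ⟨t, rfl⟩ := hdd_surj f
      induction t using TensorProduct.induction_on with
      | zero => simp
      | tmul ξ z => rw [hbridge, hx]; simp
      | add t s iht ihs => simp only [map_add, LinearMap.add_apply, iht, ihs, add_zero]
    -- the formula for ψ
    have hψform : ∀ (ξ ξ' : Dual k H) (z z' : Dual k V),
        ψ ξ ξ' z z' = z (Φ a ξ) * z' (Φ b ξ') - z (Φ b ξ) * z' (Φ a ξ') := by
      intro ξ ξ' z z'
      rw [← hS ξ ξ' z z', hSab]
      simp only [map_sub, map_smul, smul_eq_mul, hbridge, LinearMap.sub_apply,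
        LinearMap.smul_apply]
    -- pointwise parallelism of Φ a and Φ b
    have hPar : ∀ (ξ : Dual k H) (z z' : Dual k V),
        z (Φ a ξ) * z' (Φ b ξ) = z (Φ b ξ) * z' (Φ a ξ) := by
      intro ξ z z'
      have h0 : ψ ξ ξ z z' = 0 := by rw [hψalt]; simp
      rw [hψform ξ ξ z z'] at h0
      linear_combination h0
    -- case analysis on the rank of Φ a
    by_cases hA1 : ∀ ξ ξ' : Dual k H, ∀ zz zz' : Dual k V,
        zz (Φ a ξ) * zz' (Φ a ξ') = zz (Φ a ξ') * zz' (Φ a ξ)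
    · -- Φ a has rank ≤ 1, so a is a pure tensor, contradicting nondegeneracy
      have hA : ¬ ∀ ξ : Dual k H, Φ a ξ = 0 := by
        intro h
        exact hb0 (hΦ0 a h)
      push_neg at hA
      obtain ⟨ξ0, hξ0⟩ := hA
      have hz0' : ¬ ∀ z : Dual k V, z (Φ a ξ0) = 0 := by
        rw [Module.forall_dual_apply_eq_zero_iff k]
        exact hξ0
      push_neg at hz0'
      obtain ⟨z0, hz0⟩ := hz0'
      have hrep' : ∀ ξ : Dual k H, ∃ t : k, Φ a ξ = t • Φ a ξ0 := by
        intro ξ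
        rcases aux_par_exists (Φ a ξ0) (Φ a ξ) (hA1 ξ0 ξ) with h | h
        · exact absurd h hξ0
        · exact h
      set h0 : H := (Module.evalEquiv k H).symm ((z0 (Φ a ξ0))⁻¹ • (z0 ∘ₗ Φ a)) with hh0def
      have hc' : ∀ ξ : Dual k H, ξ h0 = (z0 (Φ a ξ0))⁻¹ * z0 (Φ a ξ) := by
        intro ξ
        rw [hh0def, Module.apply_evalEquiv_symm_apply]
        simp [LinearMap.smul_apply, LinearMap.comp_apply, smul_eq_mul]
      have hapure : a = h0 ⊗ₜ[k] (Φ a ξ0) := by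
        have hz : ∀ ξ : Dual k H, Φ (a - h0 ⊗ₜ[k] (Φ a ξ0)) ξ = 0 := by
          intro ξ
          obtain ⟨t, ht⟩ := hrep' ξ
          rw [map_sub, LinearMap.sub_apply, hΦpure, hc', ht, map_smul, smul_eq_mul]
          have hcc : (z0 (Φ a ξ0))⁻¹ * (t * z0 (Φ a ξ0)) = t := by
            rw [mul_comm t, ← mul_assoc, inv_mul_cancel₀ hz0, one_mul]
          rw [hcc, sub_self]
        have h := hΦ0 _ hz
        rwa [sub_eq_zero] at h
      have hh0 : h0 ≠ 0 := by
        intro h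
        rw [h] at hapure
        simp only [TensorProduct.zero_tmul] at hapure
        exact hb0 hapure
      have hvne : Φ a ξ0 ≠ 0 := hξ0
      have hWa0 : W a = 0 := by
        rw [hb0def]
        exact LinearMap.mem_ker.mp (c 1).2
      exact hnd h0 hh0 (Φ a ξ0) hvne (by rw [← hapure]; exact hWa0)
    · -- Φ a has rank ≥ 2, so Φ b = l1 • Φ a, contradicting independence
      push_neg at hA1
      obtain ⟨ξ1, ξ2, z, z', hne⟩ := hA1
      have hnopar : ¬ ∀ zz zz' : Dual k V,
          zz (Φ a ξ1) * zz' (Φ a ξ2) = zz (Φ a ξ2) * zz' (Φ a ξ1) := by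
        intro h
        exact hne (h z z')
      have hA1ne : Φ a ξ1 ≠ 0 := by
        intro h
        apply hnopar
        intro zz zz'
        simp [h]
      have hA2ne : Φ a ξ2 ≠ 0 := by
        intro h
        apply hnopar
        intro zz zz'
        simp [h]
      have hA21 : ¬ ∃ t : k, Φ a ξ2 = t • Φ a ξ1 := by
        rintro ⟨t, ht⟩
        apply hnopar
        intro zz zz'
        rw [ht, map_smul, map_smul, smul_eq_mul, smul_eq_mul]
        ring
      have hBA : ∀ ξ : Dual k H, Φ a ξ ≠ 0 → ∃ t : k, Φ b ξ = t • Φ a ξ := by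
        intro ξ hξ
        rcases aux_par_exists (Φ a ξ) (Φ b ξ) (hPar ξ) with h | h
        · exact absurd h hξ
        · exact h
      obtain ⟨l1, hl1⟩ := hBA ξ1 hA1ne
      have hgood : ∀ η : Dual k H, (¬ ∃ t : k, Φ a η = t • Φ a ξ1) →
          Φ b η = l1 • Φ a η := by
        intro η hη
        have hηne : Φ a η ≠ 0 := by
          intro h
          exact hη ⟨0, by rw [h, zero_smul]⟩
        obtain ⟨m, hm⟩ := hBA η hηne
        have hsumne : Φ a (η + ξ1) ≠ 0 := by
          rw [map_add]
          intro h
          exact hη ⟨-1, by rw [neg_smul, one_smul]; exact eq_neg_of_add_eq_zero_left h⟩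
        obtain ⟨t, ht⟩ := hBA (η + ξ1) hsumne
        rw [map_add, map_add, hm, hl1, smul_add] at ht
        have key : (m - t) • Φ a η = (t - l1) • Φ a ξ1 := by
          rw [sub_smul, sub_smul, sub_eq_sub_iff_add_eq_add, ht]
          exact add_comm _ _
        by_cases hmt : m = t
        · rw [hmt, sub_self, zero_smul] at key
          have h3 : t - l1 = 0 := by
            by_contra h4
            rcases smul_eq_zero.mp key.symm with h5 | h5
            · exact h4 h5
            · exact hA1ne h5
          have h5 : t = l1 := sub_eq_zero.mp h3
          rw [hm, hmt, h5]
        · exfalso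
          apply hη
          refine ⟨(t - l1) / (m - t), ?_⟩
          have hmt' : m - t ≠ 0 := sub_ne_zero.mpr hmt
          have h6 := congrArg (fun x => (m - t)⁻¹ • x) key
          simp only [smul_smul] at h6
          rw [inv_mul_cancel₀ hmt', one_smul] at h6
          rw [h6]
          congr 1
          rw [div_eq_mul_inv]
          ring
      have hl2 := hgood ξ2 hA21
      have hall : ∀ ξ : Dual k H, Φ b ξ = l1 • Φ a ξ := by
        intro ξ
        by_cases hξ : ∃ t : k, Φ a ξ = t • Φ a ξ1
        · obtain ⟨t, ht⟩ := hξ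
          have hg : ¬ ∃ s : k, Φ a (ξ + ξ2) = s • Φ a ξ1 := by
            rintro ⟨s, hs⟩
            rw [map_add, ht] at hs
            apply hA21
            refine ⟨s - t, ?_⟩
            rw [sub_smul, ← hs]
            abel
          have h2 := hgood (ξ + ξ2) hg
          rw [map_add, map_add, hl2, smul_add] at h2
          exact add_right_cancel h2
        · exact hgood ξ hξ
      have hba : b = l1 • a := by
        have hz : ∀ ξ : Dual k H, Φ (b - l1 • a) ξ = 0 := by
          intro ξ
          rw [map_sub, LinearMap.sub_apply, hall ξ, map_smul, LinearMap.smul_apply, sub_self]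
        have h := hΦ0 _ hz
        rwa [sub_eq_zero] at h
      have hfin : (-μ) • a0 + (-l1) • a = 0 := by
        rw [← hbdef, hba, neg_smul]
        exact add_neg_cancel _
      exact hμ0 (neg_eq_zero.mp (hind (-μ) (-l1) hfin).1)
end

section
/- Let dim H = 4. Let ω ∈ S²H*⊗Λ²V* be nondegenerate of rank 12 and suppose there exists ξ ∈ H*∖{0} with Im(ω̃) ∩ (⟨ξ⟩⊗V*) = 0. Then every σ ∈ Λ²H⊗S²V with σ̃∘ω̃ = 0 satisfies σ = 0. (This is the transcription of the paper's result that H²(S²E_ω) = 0 for every ω in the union of the sets M(4,4)_ξ, i.e. that this open part of M(4,4) is a smooth transversal intersection.) -/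
/-!
`S = σ̃` is a skew form on `(H ⊗ V)*`. It kills `Im ω̃` because `σ̃ ∘ ω̃ = 0`, and it kills the
4-dimensional subspace `⟨ξ⟩ ⊗ V*`: against `Im ω̃` by skewness, against `⟨ξ⟩ ⊗ V*` itself because
`σ` is alternating in its `H`-arguments. Since `Im ω̃` has dimension 12 and meets `⟨ξ⟩ ⊗ V*`
trivially, the two subspaces span the 16-dimensional space `(H ⊗ V)*`, so `σ̃ = 0`.
-/

open TensorProduct Module

section SkewOnDual

variable {R E : Type*} [CommRing R] [AddCommGroup E] [Module R E]

def IsSkewOnDual (S : Dual R E →ₗ[R] E) : Prop :=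
  ∀ g g' : Dual R E, g' (S g) = -g (S g')

theorem IsSkewOnDual.eq_zero_of_sup_eq_top [Projective R E] {S : Dual R E →ₗ[R] E}
    (hS : IsSkewOnDual S) {K D : Submodule R (Dual R E)} (hK : K ≤ LinearMap.ker S)
    (hD : ∀ d ∈ D, ∀ d' ∈ D, d' (S d) = 0) (hKD : K ⊔ D = ⊤) : S = 0 := by
  have hSD : ∀ d ∈ D, S d = 0 := by
    intro d hd
    refine (forall_dual_apply_eq_zero_iff R _).mp fun g => ?_
    obtain ⟨r, hr, d', hd', rfl⟩ := Submodule.mem_sup.mp (hKD ▸ Submodule.mem_top : g ∈ K ⊔ D)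
    rw [LinearMap.add_apply, hS, hK hr, map_zero, neg_zero, zero_add, hD d hd d' hd']
  ext g : 1
  obtain ⟨r, hr, d, hd, rfl⟩ := Submodule.mem_sup.mp (hKD ▸ Submodule.mem_top : g ∈ K ⊔ D)
  rw [map_add, hK hr, hSD d hd, add_zero, LinearMap.zero_apply]

end SkewOnDual

section DualDistrib

variable {R M N : Type*} [CommRing R] [AddCommGroup M] [Module R M] [AddCommGroup N] [Module R N]

theorem dualDistrib_surjective [Module.Finite R M] [Module.Finite R N] [Module.Free R M]
    [Module.Free R N] : Function.Surjective (dualDistrib R M N) :=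
  (dualDistribEquiv R M N).surjective

theorem isSkewOnDual_of_dualDistrib [Module.Finite R M] [Module.Finite R N] [Module.Free R M]
    [Module.Free R N] {ψ : Dual R M →ₗ[R] Dual R M →ₗ[R] Dual R N →ₗ[R] Dual R N →ₗ[R] R}
    (hψalt : ψ.IsAlt) (hψsymm : ∀ ξ ξ' z z', ψ ξ ξ' z z' = ψ ξ ξ' z' z)
    {S : Dual R (M ⊗[R] N) →ₗ[R] M ⊗[R] N}
    (hS : ∀ ξ ξ' z z', dualDistrib R M N (ξ' ⊗ₜ z') (S (dualDistrib R M N (ξ ⊗ₜ z))) =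
      ψ ξ ξ' z z') :
    IsSkewOnDual S := by
  let B := (Dual.eval R _ ∘ₗ S ∘ₗ dualDistrib R M N).compl₂ (dualDistrib R M N)
  have hB : B = -B.flip := TensorProduct.ext' fun ξ z => TensorProduct.ext' fun ξ' z' => by
    simp only [B, LinearMap.neg_apply, LinearMap.flip_apply, LinearMap.compl₂_apply,
      LinearMap.comp_apply, Dual.eval_apply, hS]
    rw [hψsymm ξ' ξ, ← LinearMap.IsAlt.neg (M := Dual R N →ₗ[R] Dual R N →ₗ[R] R) hψalt ξ ξ',
      LinearMap.neg_apply, LinearMap.neg_apply, neg_neg]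
  intro g g'
  obtain ⟨a, rfl⟩ := dualDistrib_surjective g
  obtain ⟨b, rfl⟩ := dualDistrib_surjective g'
  exact LinearMap.congr_fun₂ hB a b

theorem dualDistrib_comp_mk_injective [NoZeroDivisors R] {ξ : Dual R M} (hξ : ξ ≠ 0) :
    Function.Injective (dualDistrib R M N ∘ₗ TensorProduct.mk R (Dual R M) (Dual R N) ξ) := by
  obtain ⟨m, hm⟩ : ∃ m, ξ m ≠ 0 := by
    by_contra! h
    exact hξ (LinearMap.ext h)
  refine (injective_iff_map_eq_zero _).mpr fun z hz => LinearMap.ext fun n => ?_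
  have h := LinearMap.congr_fun hz (m ⊗ₜ n)
  simp only [LinearMap.comp_apply, TensorProduct.mk_apply, dualDistrib_apply,
    LinearMap.zero_apply, mul_eq_zero] at h
  exact h.resolve_left hm

end DualDistrib

theorem statement3_general
    (k : Type) [Field k]
    (V H : Type) [AddCommGroup V] [Module k V] [AddCommGroup H] [Module k H]
    [FiniteDimensional k V] [FiniteDimensional k H]
    (hV : finrank k V = 4) (hH : finrank k H = 4)
    (W : H ⊗[k] V →ₗ[k] Dual k (H ⊗[k] V))
    (hrank : finrank k (LinearMap.range W) = 12)
    (hξ : ∃ ξ : Dual k H, ξ ≠ 0 ∧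
      LinearMap.range W ⊓
        Submodule.span k {f : Dual k (H ⊗[k] V) |
          ∃ z : Dual k V, f = dualDistrib k H V (ξ ⊗ₜ z)} = ⊥)
    (ψ : Dual k H →ₗ[k] Dual k H →ₗ[k] Dual k V →ₗ[k] Dual k V →ₗ[k] k)
    (hψalt : ∀ ξ : Dual k H, ψ ξ ξ = 0)
    (hψsymm : ∀ (ξ ξ' : Dual k H) (z z' : Dual k V), ψ ξ ξ' z z' = ψ ξ ξ' z' z)
    (S : Dual k (H ⊗[k] V) →ₗ[k] H ⊗[k] V)
    (hS : ∀ (ξ ξ' : Dual k H) (z z' : Dual k V),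
      dualDistrib k H V (ξ' ⊗ₜ z') (S (dualDistrib k H V (ξ ⊗ₜ z))) = ψ ξ ξ' z z')
    (hcomp : S ∘ₗ W = 0) :
    ψ = 0 := by
  obtain ⟨ξ, hξ0, hdisj⟩ := hξ
  set L := dualDistrib k H V ∘ₗ TensorProduct.mk k (Dual k H) (Dual k V) ξ
  have hspan : Submodule.span k {f : Dual k (H ⊗[k] V) |
      ∃ z : Dual k V, f = dualDistrib k H V (ξ ⊗ₜ z)} = LinearMap.range L := by
    have hset : {f : Dual k (H ⊗[k] V) | ∃ z : Dual k V, f = dualDistrib k H V (ξ ⊗ₜ z)} =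
        Set.range L := by
      simp only [Set.range, eq_comm]
      rfl
    rw [hset, ← LinearMap.coe_range, Submodule.span_eq]
  have hsup : LinearMap.range W ⊔ LinearMap.range L = ⊤ := by
    refine Submodule.eq_top_of_disjoint _ _ ?_ (disjoint_iff.mpr (hspan ▸ hdisj))
    rw [Subspace.dual_finrank_eq, finrank_tensorProduct, hH, hV, hrank,
      LinearMap.finrank_range_of_inj (dualDistrib_comp_mk_injective hξ0),
      Subspace.dual_finrank_eq, hV]
  have hS0 : S = 0 := (isSkewOnDual_of_dualDistrib hψalt hψsymm hS).eq_zero_of_sup_eq_top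
    (by rintro _ ⟨x, rfl⟩; exact LinearMap.congr_fun hcomp x)
    (by rintro _ ⟨z, rfl⟩ _ ⟨z', rfl⟩; exact (hS ξ ξ z z').trans (by rw [hψalt]; rfl)) hsup
  ext ξ₁ ξ₂ z z'
  rw [← hS, hS0]
  rfl

/-- Let `dim H = 4` and let `ω ∈ S²H*⊗Λ²V*` (encoded by `φ`, with
induced map `W = ω̃`) be nondegenerate of rank 12, and suppose there is a
nonzero `ξ ∈ H*` with `Im(ω̃) ∩ (⟨ξ⟩⊗V*) = 0`.  Then every `σ ∈ Λ²H⊗S²V`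
(encoded by `ψ`, with induced map `S = σ̃`) with `σ̃ ∘ ω̃ = 0` vanishes.
This transcribes: `H²(S²E_ω) = 0` for every `ω` in `⋃_ξ M(4,4)_ξ`. -/
theorem statement3
    (k : Type) [Field k] [IsAlgClosed k] [CharZero k]
    (V H : Type) [AddCommGroup V] [Module k V] [AddCommGroup H] [Module k H]
    [FiniteDimensional k V] [FiniteDimensional k H]
    (hV : finrank k V = 4) (hH : finrank k H = 4)
    (φ : H →ₗ[k] H →ₗ[k] V →ₗ[k] V →ₗ[k] k)
    (hφsymm : ∀ h h' : H, φ h h' = φ h' h)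
    (hφalt : ∀ (h h' : H) (v : V), φ h h' v v = 0)
    (W : H ⊗[k] V →ₗ[k] Dual k (H ⊗[k] V))
    (hW : ∀ (h h' : H) (v v' : V), W (h ⊗ₜ v) (h' ⊗ₜ v') = φ h h' v v')
    (hrank : finrank k (LinearMap.range W) = 12)
    (hnd : ∀ h : H, h ≠ 0 → ∀ v : V, v ≠ 0 → W (h ⊗ₜ[k] v) ≠ 0)
    (hξ : ∃ ξ : Dual k H, ξ ≠ 0 ∧
      LinearMap.range W ⊓
        Submodule.span k {f : Dual k (H ⊗[k] V) |
          ∃ z : Dual k V, f = dualDistrib k H V (ξ ⊗ₜ z)} = ⊥)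
    (ψ : Dual k H →ₗ[k] Dual k H →ₗ[k] Dual k V →ₗ[k] Dual k V →ₗ[k] k)
    (hψalt : ∀ ξ : Dual k H, ψ ξ ξ = 0)
    (hψsymm : ∀ (ξ ξ' : Dual k H) (z z' : Dual k V), ψ ξ ξ' z z' = ψ ξ ξ' z' z)
    (S : Dual k (H ⊗[k] V) →ₗ[k] H ⊗[k] V)
    (hS : ∀ (ξ ξ' : Dual k H) (z z' : Dual k V),
      dualDistrib k H V (ξ' ⊗ₜ z') (S (dualDistrib k H V (ξ ⊗ₜ z))) = ψ ξ ξ' z z')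
    (hcomp : S ∘ₗ W = 0) :
    ψ = 0 :=
  statement3_general k V H hV hH W hrank hξ ψ hψalt hψsymm S hS hcomp
end

section
/- Let ω ∈ S²H*⊗Λ²V*, let ξ ∈ H*∖{0} with kernel H̄, and let ω̄ = res_ξ(ω) ∈ S²H̄*⊗Λ²V* be the restriction of ω. Then rank(ω̄) = rank(ω) if and only if Im(ω̃) ∩ (⟨ξ⟩⊗V*) = 0. (This is the equivalence (i)⇔(ii) of the paper's Lemma on restrictions of instanton tensors.) -/
open TensorProduct Module

private lemma aux_finrank_map {k E F : Type} [Field k] [AddCommGroup E] [Module k E]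
    [AddCommGroup F] [Module k F] [FiniteDimensional k E]
    (f : E →ₗ[k] F) (p : Submodule k E) :
    finrank k (p.map f) + finrank k (p ⊓ LinearMap.ker f : Submodule k E) = finrank k p := by
  have h := LinearMap.finrank_range_add_finrank_ker (f.domRestrict p)
  rw [LinearMap.range_domRestrict] at h
  have e : (LinearMap.ker (f.domRestrict p)) ≃ₗ[k] (p ⊓ LinearMap.ker f : Submodule k E) := by
    rw [LinearMap.ker_domRestrict]
    exact (Submodule.equivMapOfInjective p.subtype (Submodule.injective_subtype p) _).trans
      (LinearEquiv.ofEq _ _ (Submodule.map_comap_subtype p (LinearMap.ker f)))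
  rw [e.finrank_eq] at h
  exact h

private lemma aux_key {k E M : Type} [Field k] [AddCommGroup E] [Module k E]
    [AddCommGroup M] [Module k M] [FiniteDimensional k E] [FiniteDimensional k M]
    (b : E →ₗ[k] Dual k E) (hsym : ∀ x y : E, b x y = - b y x) (j : M →ₗ[k] E) :
    finrank k (LinearMap.range (j.dualMap ∘ₗ b ∘ₗ j)) = finrank k (LinearMap.range b) ↔
      LinearMap.range b ⊓ (LinearMap.range j).dualAnnihilator = ⊥ := by
  set N := LinearMap.range j with hN
  have hker : LinearMap.ker j.dualMap = N.dualAnnihilator :=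
    LinearMap.ker_dualMap_eq_dualAnnihilator_range j
  have hrange : LinearMap.range (j.dualMap ∘ₗ b ∘ₗ j) = (N.map b).map j.dualMap := by
    rw [LinearMap.range_comp, LinearMap.range_comp]
  constructor
  · intro hr
    have h1 : finrank k ((N.map b).map j.dualMap) ≤ finrank k ((LinearMap.range b).map j.dualMap) :=
      Submodule.finrank_mono (Submodule.map_mono (LinearMap.map_le_range))
    have h2 := aux_finrank_map j.dualMap (LinearMap.range b)
    rw [hker] at h2
    rw [hrange] at hr
    have h3 : finrank k (LinearMap.range b ⊓ N.dualAnnihilator : Submodule k (Dual k E)) = 0 := by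
      omega
    exact Submodule.finrank_eq_zero.mp h3
  · intro hA
    -- Step 1: ker b = dualCoannihilator of (N.map b)
    have hkb : LinearMap.ker b = (N.map b).dualCoannihilator := by
      ext x
      rw [Submodule.mem_dualCoannihilator]
      constructor
      · rintro hx f ⟨n, hn, rfl⟩
        rw [hsym n x, LinearMap.mem_ker.mp hx]
        simp
      · intro hx
        have hbx : b x ∈ N.dualAnnihilator := by
          rw [Submodule.mem_dualAnnihilator]
          intro w hw
          rw [hsym x w, hx (b w) ⟨w, hw, rfl⟩, neg_zero]
        have : b x ∈ LinearMap.range b ⊓ N.dualAnnihilator := ⟨⟨x, rfl⟩, hbx⟩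
        rw [hA] at this
        exact this
    -- Step 2: finrank (N.map b) = finrank (range b)
    have h4 := Subspace.finrank_add_finrank_dualCoannihilator_eq (N.map b)
    rw [← hkb] at h4
    have h5 := LinearMap.finrank_range_add_finrank_ker b
    have h6 : finrank k (N.map b) = finrank k (LinearMap.range b) := by omega
    -- Step 3
    have h7 := aux_finrank_map j.dualMap (N.map b)
    have h8 : (N.map b) ⊓ LinearMap.ker j.dualMap = ⊥ := by
      rw [hker, eq_bot_iff, ← hA]
      exact inf_le_inf_right _ LinearMap.map_le_range
    rw [h8] at h7
    simp only [finrank_bot, add_zero] at h7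
    rw [hrange, h7, h6]

/-- Let `ω ∈ S²H*⊗Λ²V*` (encoded by `φ`, with induced map `W = ω̃`),
let `ξ ∈ H*∖{0}` with kernel `H̄`, and let `ω̄ = res_ξ(ω)` be the restriction of
`φ` to `H̄ × H̄` (with induced map `Wbar`).  Then `rank(ω̄) = rank(ω)` if and only
if `Im(ω̃) ∩ (⟨ξ⟩⊗V*) = 0`. -/
theorem statement4
    (k : Type) [Field k] [IsAlgClosed k] [CharZero k]
    (V H : Type) [AddCommGroup V] [Module k V] [AddCommGroup H] [Module k H]
    [FiniteDimensional k V] [FiniteDimensional k H]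
    (hV : finrank k V = 4)
    (φ : H →ₗ[k] H →ₗ[k] V →ₗ[k] V →ₗ[k] k)
    (hφsymm : ∀ h h' : H, φ h h' = φ h' h)
    (hφalt : ∀ (h h' : H) (v : V), φ h h' v v = 0)
    (W : H ⊗[k] V →ₗ[k] Dual k (H ⊗[k] V))
    (hW : ∀ (h h' : H) (v v' : V), W (h ⊗ₜ v) (h' ⊗ₜ v') = φ h h' v v')
    (ξ : Dual k H) (hξ : ξ ≠ 0)
    (Wbar : (LinearMap.ker ξ) ⊗[k] V →ₗ[k] Dual k ((LinearMap.ker ξ) ⊗[k] V))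
    (hWbar : ∀ (x y : LinearMap.ker ξ) (v v' : V),
      Wbar (x ⊗ₜ v) (y ⊗ₜ v') = φ (x : H) (y : H) v v') :
    finrank k (LinearMap.range Wbar) = finrank k (LinearMap.range W) ↔
      LinearMap.range W ⊓
        Submodule.span k {f : Dual k (H ⊗[k] V) |
          ∃ z : Dual k V, f = dualDistrib k H V (ξ ⊗ₜ z)} = ⊥ := by
  set j : (LinearMap.ker ξ) ⊗[k] V →ₗ[k] H ⊗[k] V :=
    LinearMap.rTensor V (LinearMap.ker ξ).subtype with hj
  -- skew-symmetry of the V-arguments of φ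
  have hφskew : ∀ (h h' : H) (v v' : V), φ h h' v v' = - φ h h' v' v := by
    intro h h' v v'
    have h0 := hφalt h h' (v + v')
    simp only [map_add, LinearMap.add_apply, hφalt h h' v, hφalt h h' v'] at h0
    have h0' : φ h h' v v' + φ h h' v' v = 0 := by linear_combination h0
    exact eq_neg_of_add_eq_zero_left h0'
  -- skew-symmetry of W
  have hsym : ∀ x y : H ⊗[k] V, W x y = - W y x := by
    intro x y
    induction x using TensorProduct.induction_on with
    | zero => simp
    | tmul h v =>
      induction y using TensorProduct.induction_on with
      | zero => simp
      | tmul h' v' => rw [hW, hW, hφsymm h' h, hφskew]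
      | add a b ha hb => simp [ha, hb]; abel
    | add a b ha hb => simp [ha, hb]; abel
  -- Wbar = j* ∘ W ∘ j
  have hWbar' : Wbar = j.dualMap ∘ₗ W ∘ₗ j := by
    apply TensorProduct.ext'
    intro x v
    apply TensorProduct.ext'
    intro y v'
    simp only [LinearMap.comp_apply, hj, LinearMap.dualMap_apply, LinearMap.rTensor_tmul,
      Submodule.coe_subtype, hW, hWbar]
  -- span = dualAnnihilator of range j
  have hspan : Submodule.span k {f : Dual k (H ⊗[k] V) |
      ∃ z : Dual k V, f = dualDistrib k H V (ξ ⊗ₜ z)} = (LinearMap.range j).dualAnnihilator := by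
    apply le_antisymm
    · rw [Submodule.span_le]
      rintro f ⟨z, rfl⟩
      rw [SetLike.mem_coe, Submodule.mem_dualAnnihilator]
      rintro w ⟨t, rfl⟩
      induction t using TensorProduct.induction_on with
      | zero => simp
      | tmul x v =>
        simp only [hj, LinearMap.rTensor_tmul, Submodule.coe_subtype, dualDistrib_apply]
        rw [LinearMap.mem_ker.mp x.2, zero_mul]
      | add a b ha hb => simp [ha, hb]
    · intro f hf
      rw [Submodule.mem_dualAnnihilator] at hf
      obtain ⟨h, hh⟩ : ∃ h : H, ξ h ≠ 0 := by
        by_contra hc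
        push_neg at hc
        exact hξ (LinearMap.ext fun h => hc h)
      set h₀ : H := (ξ h)⁻¹ • h with hh₀
      have hξh₀ : ξ h₀ = 1 := by
        rw [hh₀, map_smul, smul_eq_mul, inv_mul_cancel₀ hh]
      refine Submodule.subset_span ⟨f.comp ((TensorProduct.mk k H V) h₀), ?_⟩
      apply TensorProduct.ext'
      intro a v
      have hmem : a - ξ a • h₀ ∈ LinearMap.ker ξ := by
        rw [LinearMap.mem_ker, map_sub, map_smul, hξh₀, smul_eq_mul, mul_one, sub_self]
      have hz : f ((a - ξ a • h₀) ⊗ₜ[k] v) = 0 := by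
        have := hf (j ((⟨a - ξ a • h₀, hmem⟩ : LinearMap.ker ξ) ⊗ₜ[k] v)) ⟨_, rfl⟩
        simpa only [hj, LinearMap.rTensor_tmul, Submodule.coe_subtype] using this
      rw [sub_tmul, ← smul_tmul', map_sub, LinearMap.map_smul, sub_eq_zero] at hz
      simp only [dualDistrib_apply, LinearMap.comp_apply, TensorProduct.mk_apply]
      rw [hz, smul_eq_mul]
  rw [hWbar', hspan]
  exact aux_key W hsym j
end

section
/- Let dim H = 4, fix ξ ∈ H*∖{0}, let H̄ = ker ξ, and fix a 1-dimensional subspace H₁ with H = H₁⊕H̄. Given (ω̄, α), where ω̄ ∈ S²H̄*⊗Λ²V* has bijective induced map ω̃̄ : H̄⊗V → H̄*⊗V* (i.e. ω̄ has rank 12), and α is a bilinear map H₁×H̄ → Λ²V* (inducing α̃ : H̄⊗V → H₁*⊗V* by ⟨α̃(h̄⊗v), h₁⊗v'⟩ = α(h₁,h̄)(v,v'), with transpose α̃ᵗ : H₁⊗V → H̄*⊗V*), define Θ(ω̄,α) : (H₁⊕H̄)⊗V → (H₁*⊕H̄*)⊗V* as the block map with components α̃∘ω̃̄⁻¹∘α̃ᵗ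 : H₁⊗V → H₁*⊗V*, α̃ : H̄⊗V → H₁*⊗V*, α̃ᵗ : H₁⊗V → H̄*⊗V*, and ω̃̄ : H̄⊗V → H̄*⊗V*. Then Θ(ω̄,α) is the induced map ω̃ of a unique element ω ∈ S²H*⊗Λ²V*, and the assignment (ω̄,α) ↦ ω is a bijection onto the set {ω ∈ S²H*⊗Λ²V* : rank(ω) = 12 and Im(ω̃) ∩ (⟨ξ⟩⊗V*) = 0}. (This is the paper's Lemma that the space M̃(4,4)_ξ is an affine bundle over M(3,6) with 18-dimensional fibres.) -/
/-!
Write `ω̃` in blocks for `H ⊗ V = (H₁ ⊗ V) ⊕ (H̄ ⊗ V)`. Since `⟨ξ⟩ ⊗ V*` is the annihilator of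
`H̄ ⊗ V`, the condition `Im ω̃ ∩ ⟨ξ⟩ ⊗ V* = 0` says that the restriction `R : H ⊗ V → (H̄ ⊗ V)*`
of `ω̃` has the same kernel as `ω̃`.

If `ω̃̄` is invertible and the `H₁`-block is the Schur product `α̃ ω̃̄⁻¹ α̃ᵗ`, both kernels equal
the graph `{u - ω̃̄⁻¹ α̃ᵗ u : u ∈ H₁ ⊗ V}`, which is 4-dimensional, so `ω` has rank 12. Conversely,
for `ω` in the target set `R` has rank 12 and is therefore onto `(H̄ ⊗ V)*`; skew-symmetry of `ω̃`
then makes `ω̃̄` injective, and `ω̃` vanishing on the graph forces the `H₁`-block to be the Schur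
product. That block lies in `S²H₁*⊗Λ²V*` because `ω̃̄` is alternating and `dim H₁ = 1`.
-/

open TensorProduct Module

/-- The "symmetric with alternating values" condition encoding `S²H*⊗Λ²V*`. -/
def IsSymAlt {k V H : Type} [Field k] [AddCommGroup V] [Module k V]
    [AddCommGroup H] [Module k H]
    (φ : H →ₗ[k] H →ₗ[k] V →ₗ[k] V →ₗ[k] k) : Prop :=
  (∀ h h' : H, φ h h' = φ h' h) ∧ ∀ (h h' : H) (v : V), φ h h' v v = 0

/-- `Corresponds ξ H1 φb α φ` expresses that the induced map `ω̃` of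
`ω = φ ∈ S²H*⊗Λ²V*` is the block map `Θ(ω̄,α)` associated to
`ω̄ = φb ∈ S²H̄*⊗Λ²V*` (with `H̄ = ker ξ`) and the bilinear map
`α : H₁ × H̄ → Λ²V*`: the `H̄⊗V → H̄*⊗V*` block is `ω̃̄`, the two off-diagonal
blocks are `α̃ : H̄⊗V → H₁*⊗V*` and its transpose `α̃ᵗ : H₁⊗V → H̄*⊗V*`, and the
`H₁⊗V → H₁*⊗V*` block is `α̃ ∘ ω̃̄⁻¹ ∘ α̃ᵗ`. -/
def Corresponds {k V H : Type} [Field k] [AddCommGroup V] [Module k V]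
    [AddCommGroup H] [Module k H]
    (ξ : Module.Dual k H) (H1 : Submodule k H)
    (φb : LinearMap.ker ξ →ₗ[k] LinearMap.ker ξ →ₗ[k] V →ₗ[k] V →ₗ[k] k)
    (α : H1 →ₗ[k] LinearMap.ker ξ →ₗ[k] V →ₗ[k] V →ₗ[k] k)
    (φ : H →ₗ[k] H →ₗ[k] V →ₗ[k] V →ₗ[k] k) : Prop :=
  (∀ (x y : LinearMap.ker ξ) (v v' : V), φ (x : H) (y : H) v v' = φb x y v v') ∧
  (∀ (a : H1) (x : LinearMap.ker ξ) (v v' : V),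
    φ (x : H) (a : H) v v' = α a x v v' ∧ φ (a : H) (x : H) v v' = α a x v v') ∧
  (∀ Wb : (LinearMap.ker ξ) ⊗[k] V →ₗ[k] Module.Dual k ((LinearMap.ker ξ) ⊗[k] V),
    (∀ (x y : LinearMap.ker ξ) (v v' : V), Wb (x ⊗ₜ v) (y ⊗ₜ v') = φb x y v v') →
    ∀ Wbinv : Module.Dual k ((LinearMap.ker ξ) ⊗[k] V) →ₗ[k] (LinearMap.ker ξ) ⊗[k] V,
      (∀ u, Wb (Wbinv u) = u) → (∀ u, Wbinv (Wb u) = u) →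
    ∀ At : H1 ⊗[k] V →ₗ[k] Module.Dual k ((LinearMap.ker ξ) ⊗[k] V),
      (∀ (a : H1) (v : V) (y : LinearMap.ker ξ) (v' : V),
        At (a ⊗ₜ v) (y ⊗ₜ v') = α a y v v') →
    ∀ A : (LinearMap.ker ξ) ⊗[k] V →ₗ[k] Module.Dual k (H1 ⊗[k] V),
      (∀ (y : LinearMap.ker ξ) (v : V) (a : H1) (v' : V),
        A (y ⊗ₜ v) (a ⊗ₜ v') = α a y v v') →
    ∀ (a a' : H1) (v v' : V),
      φ (a : H) (a' : H) v v' = A (Wbinv (At (a ⊗ₜ v))) (a' ⊗ₜ v'))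

/-- The target set: `ω = φ` has `rank(ω) = 12` and `Im(ω̃) ∩ (⟨ξ⟩⊗V*) = 0`;
`ω̃` is the induced map `W`, quantified through its determining property. -/
def InTargetSet {k V H : Type} [Field k] [AddCommGroup V] [Module k V]
    [AddCommGroup H] [Module k H]
    (ξ : Module.Dual k H)
    (φ : H →ₗ[k] H →ₗ[k] V →ₗ[k] V →ₗ[k] k) : Prop :=
  ∀ W : H ⊗[k] V →ₗ[k] Module.Dual k (H ⊗[k] V),
    (∀ (h h' : H) (v v' : V), W (h ⊗ₜ v) (h' ⊗ₜ v') = φ h h' v v') →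
    Module.finrank k (LinearMap.range W) = 12 ∧
    LinearMap.range W ⊓
      Submodule.span k {f : Module.Dual k (H ⊗[k] V) |
        ∃ z : Module.Dual k V, f = dualDistrib k H V (ξ ⊗ₜ z)} = ⊥

section InducedMap

variable {k V X Y : Type} [CommRing k] [AddCommGroup V] [Module k V]
  [AddCommGroup X] [Module k X] [AddCommGroup Y] [Module k Y]

/-- The induced map `ω̃ : X ⊗ V → (Y ⊗ V)*` of the paper. -/
noncomputable def inducedMap (φ : X →ₗ[k] Y →ₗ[k] V →ₗ[k] V →ₗ[k] k) :
    X ⊗[k] V →ₗ[k] Dual k (Y ⊗[k] V) :=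
  lift ((LinearMap.lflip.toLinearMap ∘ₗ φ).compr₂ (uncurry (.id k) Y V k))

noncomputable def coinducedMap (T : X ⊗[k] V →ₗ[k] Dual k (Y ⊗[k] V)) :
    X →ₗ[k] Y →ₗ[k] V →ₗ[k] V →ₗ[k] k :=
  LinearMap.lflip.toLinearMap ∘ₗ
    lcurry (.id k) X V (Y →ₗ[k] V →ₗ[k] k) (lcurry (.id k) Y V k ∘ₗ T)

@[simp]
theorem inducedMap_tmul (φ : X →ₗ[k] Y →ₗ[k] V →ₗ[k] V →ₗ[k] k) (x : X) (v : V) (y : Y)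
    (v' : V) :
    inducedMap φ (x ⊗ₜ v) (y ⊗ₜ v') = φ x y v v' := by
  simp [inducedMap]

@[simp]
theorem coinducedMap_apply (T : X ⊗[k] V →ₗ[k] Dual k (Y ⊗[k] V)) (x : X) (y : Y) (v v' : V) :
    coinducedMap T x y v v' = T (x ⊗ₜ v) (y ⊗ₜ v') := by
  simp [coinducedMap]

theorem TensorProduct.ext_tmul_tmul {T T' : X ⊗[k] V →ₗ[k] Dual k (Y ⊗[k] V)}
    (h : ∀ x v y v', T (x ⊗ₜ v) (y ⊗ₜ v') = T' (x ⊗ₜ v) (y ⊗ₜ v')) : T = T' :=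
  TensorProduct.ext' fun x v => TensorProduct.ext' fun y v' => h x v y v'

theorem eq_inducedMap {T : X ⊗[k] V →ₗ[k] Dual k (Y ⊗[k] V)}
    {φ : X →ₗ[k] Y →ₗ[k] V →ₗ[k] V →ₗ[k] k}
    (h : ∀ x y v v', T (x ⊗ₜ v) (y ⊗ₜ v') = φ x y v v') : T = inducedMap φ :=
  ext_tmul_tmul fun x v y v' => by rw [h, inducedMap_tmul]

theorem forall_imp_iff_inducedMap (φ : X →ₗ[k] Y →ₗ[k] V →ₗ[k] V →ₗ[k] k)
    (P : (X ⊗[k] V →ₗ[k] Dual k (Y ⊗[k] V)) → Prop) :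
    (∀ T : X ⊗[k] V →ₗ[k] Dual k (Y ⊗[k] V),
      (∀ x y v v', T (x ⊗ₜ v) (y ⊗ₜ v') = φ x y v v') → P T) ↔ P (inducedMap φ) :=
  ⟨fun h => h _ fun x y v v' => inducedMap_tmul φ x v y v',
    fun h _ hT => eq_inducedMap hT ▸ h⟩

@[simp]
theorem inducedMap_coinducedMap (T : X ⊗[k] V →ₗ[k] Dual k (Y ⊗[k] V)) :
    inducedMap (coinducedMap T) = T :=
  ext_tmul_tmul fun x v y v' => by simp

theorem inducedMap_injective :
    Function.Injective (inducedMap : (X →ₗ[k] Y →ₗ[k] V →ₗ[k] V →ₗ[k] k) → _) := by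
  intro φ ψ h
  ext x y v v'
  simpa using congr($h (x ⊗ₜ v) (y ⊗ₜ v'))

theorem inducedMap_compl₁₂ {X' Y' : Type} [AddCommGroup X'] [Module k X'] [AddCommGroup Y']
    [Module k Y'] (φ : X →ₗ[k] Y →ₗ[k] V →ₗ[k] V →ₗ[k] k) (f : X' →ₗ[k] X) (g : Y' →ₗ[k] Y) :
    inducedMap (φ.compl₁₂ f g) = (g.rTensor V).dualMap ∘ₗ inducedMap φ ∘ₗ f.rTensor V :=
  ext_tmul_tmul fun x v y v' => by simp

theorem inducedMap_flip (α : X →ₗ[k] Y →ₗ[k] V →ₗ[k] V →ₗ[k] k)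
    (hα : ∀ x y, (α x y).IsAlt) : inducedMap α.flip = -(inducedMap α).flip :=
  ext_tmul_tmul fun y v x v' => by simp [← (hα x y).neg v v']

end InducedMap

namespace IsSymAlt

variable {k V X Y : Type} [Field k] [AddCommGroup V] [Module k V]
  [AddCommGroup X] [Module k X] [AddCommGroup Y] [Module k Y]
  {φ ψ : X →ₗ[k] X →ₗ[k] V →ₗ[k] V →ₗ[k] k}

theorem add (hφ : IsSymAlt φ) (hψ : IsSymAlt ψ) : IsSymAlt (φ + ψ) :=
  ⟨fun h h' => by simp [hφ.1 h h', hψ.1 h h'], fun h h' v => by simp [hφ.2, hψ.2]⟩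

theorem compl₁₂ (hφ : IsSymAlt φ) (f : Y →ₗ[k] X) : IsSymAlt (φ.compl₁₂ f f) :=
  ⟨fun y y' => hφ.1 (f y) (f y'), fun y y' => hφ.2 (f y) (f y')⟩

theorem add_flip (hψ : ∀ x x', (ψ x x').IsAlt) : IsSymAlt (ψ + ψ.flip) :=
  ⟨fun x x' => add_comm _ _,
    fun x x' v => by simp [(hψ x x').self_eq_zero, (hψ x' x).self_eq_zero]⟩

theorem of_finrank_eq_one (hX : finrank k X = 1) (hψ : ∀ x, (ψ x x).IsAlt) : IsSymAlt ψ := by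
  have : FiniteDimensional k X := .of_finrank_eq_succ hX
  obtain ⟨e, he⟩ := finrank_pos_iff_exists_ne_zero.mp (hX ▸ Nat.one_pos)
  have hmul : ∀ x, ∃ c : k, c • e = x := exists_smul_eq_of_finrank_eq_one hX he
  refine ⟨fun x x' => ?_, fun x x' v => ?_⟩
  · obtain ⟨c, rfl⟩ := hmul x
    obtain ⟨c', rfl⟩ := hmul x'
    simp only [map_smul, LinearMap.smul_apply, smul_smul, mul_comm]
  · obtain ⟨c, rfl⟩ := hmul x
    obtain ⟨c', rfl⟩ := hmul x'
    simp [(hψ e).self_eq_zero]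

theorem isAlt_inducedMap (hφ : IsSymAlt φ) : (inducedMap φ).IsAlt := by
  have skew : ∀ u u', inducedMap φ u u' = -inducedMap φ u' u := by
    have : inducedMap φ = -(inducedMap φ).flip :=
      ext_tmul_tmul fun h v h' v' => by
        simp [hφ.1 h' h, ← LinearMap.IsAlt.neg (B := φ h h') (hφ.2 h h') v v']
    intro u u'
    conv_lhs => rw [this]
    simp
  intro u
  induction u using TensorProduct.induction_on with
  | zero => simp
  | tmul h v => simpa using hφ.2 h h v
  | add u u' hu hu' => simp [hu, hu', skew u u']

end IsSymAlt

namespace LinearMap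

variable {k M : Type} [Field k] [AddCommGroup M] [Module k M]

theorem surjective_comp_of_ker_le {N P : Type} [AddCommGroup N] [Module k N]
    [AddCommGroup P] [Module k P] [FiniteDimensional k M] [FiniteDimensional k P]
    {f : M →ₗ[k] N} {g : N →ₗ[k] P} (hker : ker (g ∘ₗ f) ≤ ker f)
    (hf : finrank k (range f) = finrank k P) : Function.Surjective (g ∘ₗ f) := by
  have hker_eq : ker (g ∘ₗ f) = ker f := le_antisymm hker (ker_le_ker_comp f g)
  have h₁ := finrank_range_add_finrank_ker (g ∘ₗ f)
  have h₂ := finrank_range_add_finrank_ker f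
  rw [hker_eq] at h₁
  rw [← range_eq_top]
  exact Submodule.eq_top_of_finrank_eq (by omega)

theorem range_inf_ker_eq_bot_iff {N P : Type} [AddCommGroup N] [Module k N]
    [AddCommGroup P] [Module k P] (f : M →ₗ[k] N) (g : N →ₗ[k] P) :
    range f ⊓ ker g = ⊥ ↔ ker (g ∘ₗ f) ≤ ker f := by
  refine ⟨fun h u hu => ?_, fun h => eq_bot_iff.mpr ?_⟩
  · have : f u ∈ range f ⊓ ker g := ⟨mem_range_self f u, hu⟩
    rwa [h, Submodule.mem_bot] at this
  · rintro _ ⟨⟨u, rfl⟩, hu⟩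
    exact h hu

theorem isAlt_flip_comp_symm_comp {N P : Type} [AddCommGroup N] [Module k N]
    [AddCommGroup P] [Module k P] (Wb : N ≃ₗ[k] Dual k N)
    (hWb : (Wb : N →ₗ[k] Dual k N).IsAlt) (At : P →ₗ[k] Dual k N) :
    (At.flip ∘ₗ Wb.symm.toLinearMap ∘ₗ At).IsAlt := fun u => by
  simpa using hWb (Wb.symm (At u))

end LinearMap

namespace SchurComplement

open LinearMap

variable {k M M₁ M₂ : Type} [Field k] [AddCommGroup M] [Module k M]
  [AddCommGroup M₁] [Module k M₁] [AddCommGroup M₂] [Module k M₂]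

variable {W : M →ₗ[k] Dual k M} {i₁ : M₁ →ₗ[k] M} {i₂ : M₂ →ₗ[k] M}

theorem injective_of_ker_le (hW : W.IsAlt) (hker : ker (i₂.dualMap ∘ₗ W) ≤ ker W)
    (hsurj : Function.Surjective (i₂.dualMap ∘ₗ W)) :
    Function.Injective (i₂.dualMap ∘ₗ W ∘ₗ i₂) := by
  refine (injective_iff_map_eq_zero _).mpr fun y hy => ?_
  have hWy : W (i₂ y) = 0 := hker hy
  refine (forall_dual_apply_eq_zero_iff k y).mp fun g => ?_
  obtain ⟨u, rfl⟩ := hsurj g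
  simp [← hW.neg (i₂ y) u, hWy]

variable (W i₁ i₂) in
noncomputable def graph (Wb : M₂ ≃ₗ[k] Dual k M₂) : M₁ →ₗ[k] M :=
  i₁ - i₂ ∘ₗ Wb.symm.toLinearMap ∘ₗ i₂.dualMap ∘ₗ W ∘ₗ i₁

variable {Wb : M₂ ≃ₗ[k] Dual k M₂}

theorem graph_apply (x : M₁) :
    graph W i₁ i₂ Wb x = i₁ x - i₂ (Wb.symm (i₂.dualMap (W (i₁ x)))) :=
  rfl

theorem eq_zero_of_dualMap_eq_zero (hi : Function.Surjective (i₁.coprod i₂)) {f : Dual k M}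
    (h₁ : i₁.dualMap f = 0) (h₂ : i₂.dualMap f = 0) : f = 0 := by
  ext u
  obtain ⟨⟨x, y⟩, rfl⟩ := hi u
  simp [← dualMap_apply, h₁, h₂]

theorem graph_injective (hi : Function.Injective (i₁.coprod i₂)) :
    Function.Injective (graph W i₁ i₂ Wb) := by
  refine (injective_iff_map_eq_zero _).mpr fun x hx => ?_
  have : i₁.coprod i₂ (x, -Wb.symm (i₂.dualMap (W (i₁ x)))) = i₁.coprod i₂ 0 := by
    simpa [graph_apply, sub_eq_add_neg] using hx
  exact congr(Prod.fst $(hi this))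

variable (hWb : i₂.dualMap ∘ₗ W ∘ₗ i₂ = Wb)
include hWb

theorem dualMap_comp_graph (x : M₁) : i₂.dualMap (W (graph W i₁ i₂ Wb x)) = 0 := by
  have := congr($hWb (Wb.symm (i₂.dualMap (W (i₁ x)))))
  simp only [comp_apply, LinearEquiv.coe_coe] at this
  rw [graph_apply, map_sub, map_sub, this, Wb.apply_symm_apply, sub_self]

theorem mem_range_graph (hi : Function.Surjective (i₁.coprod i₂)) {u : M}
    (hu : i₂.dualMap (W u) = 0) : u ∈ range (graph W i₁ i₂ Wb) := by
  obtain ⟨⟨x, y⟩, rfl⟩ := hi u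
  refine ⟨x, ?_⟩
  have hy : Wb.symm (i₂.dualMap (W (i₁ x))) = -y := by
    have := congr($hWb y)
    simp only [comp_apply, LinearEquiv.coe_coe] at this
    rw [Wb.symm_apply_eq, map_neg, ← this, eq_neg_iff_add_eq_zero]
    simpa using hu
  simp [graph_apply, hy, sub_eq_add_neg]

theorem ker_eq_range_graph (hi : Function.Surjective (i₁.coprod i₂))
    (hD : i₁.dualMap ∘ₗ W ∘ₗ i₁ =
      (i₁.dualMap ∘ₗ W ∘ₗ i₂) ∘ₗ Wb.symm.toLinearMap ∘ₗ (i₂.dualMap ∘ₗ W ∘ₗ i₁)) :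
    ker W = range (graph W i₁ i₂ Wb) := by
  refine le_antisymm (fun u hu => mem_range_graph hWb hi (by simp [mem_ker.mp hu])) ?_
  rintro _ ⟨x, rfl⟩
  refine eq_zero_of_dualMap_eq_zero hi ?_ (dualMap_comp_graph hWb x)
  rw [graph_apply, map_sub, map_sub, sub_eq_zero]
  exact congr($hD x)

theorem schur_of_ker_le (hker : ker (i₂.dualMap ∘ₗ W) ≤ ker W) :
    i₁.dualMap ∘ₗ W ∘ₗ i₁ =
      (i₁.dualMap ∘ₗ W ∘ₗ i₂) ∘ₗ Wb.symm.toLinearMap ∘ₗ (i₂.dualMap ∘ₗ W ∘ₗ i₁) := by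
  refine LinearMap.ext fun x => ?_
  have hx : W (graph W i₁ i₂ Wb x) = 0 := hker (dualMap_comp_graph hWb x)
  rw [graph_apply, map_sub, sub_eq_zero] at hx
  exact congr(i₁.dualMap $hx)

end SchurComplement

section Decomposition

open LinearMap

variable {k V H N : Type} [Field k] [AddCommGroup V] [Module k V] [AddCommGroup H]
  [Module k H] [AddCommMonoid N] [Module k N] {p q : Submodule k H}

theorem bijective_coprod_rTensor_subtype (hpq : IsCompl p q) :
    Function.Bijective ((p.subtype.rTensor V).coprod (q.subtype.rTensor V)) := by
  have :
      (p.subtype.rTensor V).coprod (q.subtype.rTensor V) ∘ₗ (prodLeft k k p q V).toLinearMap =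
        LinearEquiv.rTensor V (Submodule.prodEquivOfIsCompl p q hpq) :=
    TensorProduct.ext' fun ⟨x, y⟩ v => by simp [add_tmul]
  refine (Function.Bijective.of_comp_iff _ (prodLeft k k p q V).bijective).mp ?_
  convert (LinearEquiv.rTensor V (Submodule.prodEquivOfIsCompl p q hpq)).bijective
  exact congr(⇑$this)

theorem span_dualDistrib_eq_ker_dualMap {ξ : Dual k H} (hξ : ξ ≠ 0) :
    Submodule.span k {f : Dual k (H ⊗[k] V) | ∃ z : Dual k V, f = dualDistrib k H V (ξ ⊗ₜ z)} =
      ker ((ker ξ).subtype.rTensor V).dualMap := by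
  refine le_antisymm (Submodule.span_le.mpr ?_) fun f hf => Submodule.subset_span ?_
  · rintro _ ⟨z, rfl⟩
    refine mem_ker.mpr (TensorProduct.ext' fun x v => ?_)
    simp [mem_ker.mp x.2]
  · obtain ⟨e, he⟩ : ∃ e, ξ e = 1 := by
      obtain ⟨e₀, he₀⟩ := DFunLike.ne_iff.mp hξ
      exact ⟨(ξ e₀)⁻¹ • e₀, by simp [inv_mul_cancel₀ he₀]⟩
    refine ⟨f ∘ₗ TensorProduct.mk k H V e, TensorProduct.ext' fun h v => ?_⟩
    have hker : h - ξ h • e ∈ ker ξ := by simp [he]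
    have hvanish : f ((h - ξ h • e) ⊗ₜ v) = 0 := congr($(mem_ker.mp hf) (⟨_, hker⟩ ⊗ₜ v))
    rw [sub_tmul, map_sub, sub_eq_zero] at hvanish
    simp [hvanish, ← smul_tmul']

theorem ext_of_isCompl (hpq : IsCompl p q) {φ ψ : H →ₗ[k] H →ₗ[k] N}
    (h₁₁ : φ.compl₁₂ p.subtype p.subtype = ψ.compl₁₂ p.subtype p.subtype)
    (h₁₂ : φ.compl₁₂ p.subtype q.subtype = ψ.compl₁₂ p.subtype q.subtype)
    (h₂₁ : φ.compl₁₂ q.subtype p.subtype = ψ.compl₁₂ q.subtype p.subtype)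
    (h₂₂ : φ.compl₁₂ q.subtype q.subtype = ψ.compl₁₂ q.subtype q.subtype) : φ = ψ := by
  refine ext_on_codisjoint hpq.codisjoint (fun a ha => ?_) (fun x hx => ?_) <;>
    refine ext_on_codisjoint hpq.codisjoint (fun b hb => ?_) (fun y hy => ?_)
  exacts [congr($h₁₁ ⟨a, ha⟩ ⟨b, hb⟩), congr($h₁₂ ⟨a, ha⟩ ⟨y, hy⟩),
    congr($h₂₁ ⟨x, hx⟩ ⟨b, hb⟩), congr($h₂₂ ⟨x, hx⟩ ⟨y, hy⟩)]

variable (hpq : IsCompl p q)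

noncomputable def blockForm (β₁₁ : p →ₗ[k] p →ₗ[k] N) (β₁₂ : p →ₗ[k] q →ₗ[k] N)
    (β₂₂ : q →ₗ[k] q →ₗ[k] N) : H →ₗ[k] H →ₗ[k] N :=
  β₁₁.compl₁₂ (p.projectionOnto q hpq) (p.projectionOnto q hpq) +
    (β₁₂.compl₁₂ (p.projectionOnto q hpq) (q.projectionOnto p hpq.symm) +
      (β₁₂.compl₁₂ (p.projectionOnto q hpq) (q.projectionOnto p hpq.symm)).flip) +
    β₂₂.compl₁₂ (q.projectionOnto p hpq.symm) (q.projectionOnto p hpq.symm)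

variable (β₁₁ : p →ₗ[k] p →ₗ[k] N) (β₁₂ : p →ₗ[k] q →ₗ[k] N) (β₂₂ : q →ₗ[k] q →ₗ[k] N)

@[simp]
theorem blockForm_compl₁₂_left_left :
    (blockForm hpq β₁₁ β₁₂ β₂₂).compl₁₂ p.subtype p.subtype = β₁₁ := by
  ext; simp [blockForm]

@[simp]
theorem blockForm_compl₁₂_left_right :
    (blockForm hpq β₁₁ β₁₂ β₂₂).compl₁₂ p.subtype q.subtype = β₁₂ := by
  ext; simp [blockForm]

@[simp]
theorem blockForm_compl₁₂_right_left :
    (blockForm hpq β₁₁ β₁₂ β₂₂).compl₁₂ q.subtype p.subtype = β₁₂.flip := by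
  ext; simp [blockForm]

@[simp]
theorem blockForm_compl₁₂_right_right :
    (blockForm hpq β₁₁ β₁₂ β₂₂).compl₁₂ q.subtype q.subtype = β₂₂ := by
  ext; simp [blockForm]

end Decomposition

theorem IsSymAlt.blockForm {k V H : Type} [Field k] [AddCommGroup V] [Module k V]
    [AddCommGroup H] [Module k H] {p q : Submodule k H} (hpq : IsCompl p q)
    {β₁₁ : p →ₗ[k] p →ₗ[k] V →ₗ[k] V →ₗ[k] k} {β₁₂ : p →ₗ[k] q →ₗ[k] V →ₗ[k] V →ₗ[k] k}
    {β₂₂ : q →ₗ[k] q →ₗ[k] V →ₗ[k] V →ₗ[k] k}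
    (h₁₁ : IsSymAlt β₁₁) (h₁₂ : ∀ a x, (β₁₂ a x).IsAlt) (h₂₂ : IsSymAlt β₂₂) :
    IsSymAlt (blockForm (N := V →ₗ[k] V →ₗ[k] k) hpq β₁₁ β₁₂ β₂₂) :=
  ((h₁₁.compl₁₂ _).add (IsSymAlt.add_flip fun _ _ => h₁₂ _ _)).add (h₂₂.compl₁₂ _)

section Correspondence

open LinearMap SchurComplement

variable {k V H : Type} [Field k] [AddCommGroup V] [Module k V] [AddCommGroup H]
  [Module k H] {ξ : Dual k H} {H1 : Submodule k H}

/-- The block `α̃ ∘ ω̃̄⁻¹ ∘ α̃ᵗ` of `Θ(ω̄,α)`. -/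
noncomputable def schurBlock (φb : ker ξ →ₗ[k] ker ξ →ₗ[k] V →ₗ[k] V →ₗ[k] k)
    (α : H1 →ₗ[k] ker ξ →ₗ[k] V →ₗ[k] V →ₗ[k] k) (hφb : Function.Bijective (inducedMap φb)) :
    H1 ⊗[k] V →ₗ[k] Dual k (H1 ⊗[k] V) :=
  inducedMap α.flip ∘ₗ (LinearEquiv.ofBijective _ hφb).symm.toLinearMap ∘ₗ inducedMap α

variable {φb : ker ξ →ₗ[k] ker ξ →ₗ[k] V →ₗ[k] V →ₗ[k] k}
  {α : H1 →ₗ[k] ker ξ →ₗ[k] V →ₗ[k] V →ₗ[k] k} {φ : H →ₗ[k] H →ₗ[k] V →ₗ[k] V →ₗ[k] k}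

theorem isAlt_schurBlock (hφb : IsSymAlt φb) (hWb : Function.Bijective (inducedMap φb))
    (hα : ∀ a x, (α a x).IsAlt) : (schurBlock φb α hWb).IsAlt := by
  have := isAlt_flip_comp_symm_comp (LinearEquiv.ofBijective _ hWb) hφb.isAlt_inducedMap
    (inducedMap α)
  intro u
  simpa [schurBlock, inducedMap_flip α hα] using this u

theorem corresponds_iff (hWb : Function.Bijective (inducedMap φb)) :
    Corresponds ξ H1 φb α φ ↔
      φ.compl₁₂ H1.subtype H1.subtype = coinducedMap (schurBlock φb α hWb) ∧
      φ.compl₁₂ H1.subtype (ker ξ).subtype = α ∧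
      φ.compl₁₂ (ker ξ).subtype H1.subtype = α.flip ∧
      φ.compl₁₂ (ker ξ).subtype (ker ξ).subtype = φb := by
  set Wb := LinearEquiv.ofBijective _ hWb
  constructor
  · rintro ⟨h₂₂, h₁₂, h₁₁⟩
    refine ⟨?_, ?_, ?_, ?_⟩
    · ext a a' v v'
      exact h₁₁ Wb (fun x y v v' => inducedMap_tmul φb x v y v') Wb.symm Wb.apply_symm_apply
        Wb.symm_apply_apply _ (inducedMap_tmul α) _ (inducedMap_tmul α.flip) a a' v v'
    · ext a x v v'
      exact (h₁₂ a x v v').2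
    · ext x a v v'
      exact (h₁₂ a x v v').1
    · ext x y v v'
      exact h₂₂ x y v v'
  · rintro ⟨h₁₁, h₁₂, h₂₁, h₂₂⟩
    refine ⟨fun x y v v' => congr($h₂₂ x y v v'),
      fun a x v v' => ⟨congr($h₂₁ x a v v'), congr($h₁₂ a x v v')⟩, ?_⟩
    intro Wb' hWb' Wbinv hl _ At hAt A hA a a' v v'
    obtain rfl := eq_inducedMap hWb'
    obtain rfl := eq_inducedMap fun a y v v' => hAt a v y v'
    obtain rfl := eq_inducedMap (φ := α.flip) fun y a v v' => hA y v a v'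
    have hinv : Wbinv = Wb.symm :=
      LinearMap.ext fun u => (Wb.symm_apply_eq.mpr (hl u).symm).symm
    subst hinv
    simpa [schurBlock] using congr($h₁₁ a a' v v')

theorem existsUnique_corresponds (hcompl : IsCompl H1 (ker ξ)) (hH1 : finrank k H1 = 1)
    (hφb : IsSymAlt φb) (hWb : Function.Bijective (inducedMap φb))
    (hα : ∀ a x, (α a x).IsAlt) :
    ∃! φ, IsSymAlt φ ∧ Corresponds ξ H1 φb α φ := by
  have hT : IsSymAlt (coinducedMap (schurBlock φb α hWb)) :=
    .of_finrank_eq_one hH1 fun a v => by simpa using isAlt_schurBlock hφb hWb hα (a ⊗ₜ v)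
  refine ⟨blockForm hcompl (coinducedMap (schurBlock φb α hWb)) α φb,
    ⟨hT.blockForm hcompl hα hφb,
      (corresponds_iff hWb).mpr ⟨by simp, by simp, by simp, by simp⟩⟩,
    fun ψ ⟨_, hψ⟩ => ?_⟩
  obtain ⟨h₁₁, h₁₂, h₂₁, h₂₂⟩ := (corresponds_iff hWb).mp hψ
  exact ext_of_isCompl hcompl (by simp [h₁₁]) (by simp [h₁₂]) (by simp [h₂₁]) (by simp [h₂₂])

theorem corresponds_restrict (hφ : IsSymAlt φ)
    (hker : ker (((ker ξ).subtype.rTensor V).dualMap ∘ₗ inducedMap φ) ≤ ker (inducedMap φ))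
    (hWb : Function.Bijective (inducedMap (φ.compl₁₂ (ker ξ).subtype (ker ξ).subtype))) :
    Corresponds ξ H1 (φ.compl₁₂ (ker ξ).subtype (ker ξ).subtype)
      (φ.compl₁₂ H1.subtype (ker ξ).subtype) φ := by
  have hblock : ((ker ξ).subtype.rTensor V).dualMap ∘ₗ inducedMap φ ∘ₗ
      (ker ξ).subtype.rTensor V = LinearEquiv.ofBijective _ hWb := by
    rw [← inducedMap_compl₁₂]
    rfl
  have hflip : φ.compl₁₂ (ker ξ).subtype H1.subtype =
      (φ.compl₁₂ H1.subtype (ker ξ).subtype).flip := by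
    ext x a v v'
    simp [hφ.1 x a]
  refine (corresponds_iff hWb).mpr ⟨inducedMap_injective ?_, rfl, hflip, rfl⟩
  rw [inducedMap_coinducedMap, schurBlock, ← hflip, inducedMap_compl₁₂ φ H1.subtype,
    inducedMap_compl₁₂ φ (ker ξ).subtype H1.subtype,
    inducedMap_compl₁₂ φ H1.subtype (ker ξ).subtype]
  exact schur_of_ker_le hblock hker

theorem inTargetSet_iff (hξ : ξ ≠ 0) :
    InTargetSet ξ φ ↔ finrank k (range (inducedMap φ)) = 12 ∧
      ker (((ker ξ).subtype.rTensor V).dualMap ∘ₗ inducedMap φ) ≤ ker (inducedMap φ) := by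
  rw [InTargetSet, forall_imp_iff_inducedMap φ (fun W => _ ∧ _),
    span_dualDistrib_eq_ker_dualMap hξ, range_inf_ker_eq_bot_iff]

variable [FiniteDimensional k V] [FiniteDimensional k H]

theorem inTargetSet_of_corresponds (hV : finrank k V = 4) (hH : finrank k H = 4)
    (hξ : ξ ≠ 0) (hH1 : finrank k H1 = 1) (hcompl : IsCompl H1 (ker ξ))
    (hWb : Function.Bijective (inducedMap φb)) (hc : Corresponds ξ H1 φb α φ) :
    InTargetSet ξ φ := by
  obtain ⟨h₁₁, h₁₂, h₂₁, h₂₂⟩ := (corresponds_iff hWb).mp hc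
  have hi := bijective_coprod_rTensor_subtype (V := V) hcompl
  have hblock : ((ker ξ).subtype.rTensor V).dualMap ∘ₗ inducedMap φ ∘ₗ
      (ker ξ).subtype.rTensor V = LinearEquiv.ofBijective _ hWb := by
    rw [← inducedMap_compl₁₂, h₂₂]
    rfl
  have hschur := ker_eq_range_graph hblock hi.2 (by
    simp only [← inducedMap_compl₁₂, h₁₁, h₁₂, h₂₁, inducedMap_coinducedMap]
    rfl)
  have hker : finrank k (ker (inducedMap φ)) = 4 := by
    rw [hschur, finrank_range_of_inj (graph_injective hi.1), finrank_tensorProduct, hH1, hV]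
  have hrank := finrank_range_add_finrank_ker (inducedMap φ)
  rw [finrank_tensorProduct, hH, hV, hker] at hrank
  exact (inTargetSet_iff hξ).mpr
    ⟨by omega, fun u hu => hschur ▸ mem_range_graph hblock hi.2 hu⟩

theorem bijective_inducedMap_restrict (hV : finrank k V = 4) (hH : finrank k H = 4)
    (hH1 : finrank k H1 = 1)
    (hcompl : IsCompl H1 (ker ξ)) (hφ : IsSymAlt φ)
    (hrank : finrank k (range (inducedMap φ)) = 12)
    (hker : ker (((ker ξ).subtype.rTensor V).dualMap ∘ₗ inducedMap φ) ≤ ker (inducedMap φ)) :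
    Function.Bijective (inducedMap (φ.compl₁₂ (ker ξ).subtype (ker ξ).subtype)) := by
  have hHb : finrank k (ker ξ) = 3 := by
    have := Submodule.finrank_add_eq_of_isCompl hcompl
    omega
  have hsurj := surjective_comp_of_ker_le hker (by
    rw [hrank, Subspace.dual_finrank_eq, finrank_tensorProduct, hHb, hV])
  have hinj := injective_of_ker_le hφ.isAlt_inducedMap hker hsurj
  rw [inducedMap_compl₁₂]
  exact ⟨hinj, (injective_iff_surjective_of_finrank_eq_finrank
    Subspace.dual_finrank_eq.symm).mp hinj⟩

theorem existsUnique_of_inTargetSet (hV : finrank k V = 4) (hH : finrank k H = 4) (hξ : ξ ≠ 0)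
    (hH1 : finrank k H1 = 1) (hcompl : IsCompl H1 (ker ξ)) (hφ : IsSymAlt φ)
    (hT : InTargetSet ξ φ) :
    ∃! p : (ker ξ →ₗ[k] ker ξ →ₗ[k] V →ₗ[k] V →ₗ[k] k) ×
        (H1 →ₗ[k] ker ξ →ₗ[k] V →ₗ[k] V →ₗ[k] k),
      IsSymAlt p.1 ∧ Function.Bijective (inducedMap p.1) ∧ (∀ a x, (p.2 a x).IsAlt) ∧
        Corresponds ξ H1 p.1 p.2 φ := by
  obtain ⟨hrank, hker⟩ := (inTargetSet_iff hξ).mp hT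
  have hWb := bijective_inducedMap_restrict hV hH hH1 hcompl hφ hrank hker
  refine ⟨(φ.compl₁₂ (ker ξ).subtype (ker ξ).subtype, φ.compl₁₂ H1.subtype (ker ξ).subtype),
    ⟨hφ.compl₁₂ _, hWb, fun a x => hφ.2 a x, corresponds_restrict hφ hker hWb⟩, ?_⟩
  rintro ⟨φb, α⟩ ⟨-, hWb', -, hc⟩
  obtain ⟨-, h₁₂, -, h₂₂⟩ := (corresponds_iff hWb').mp hc
  exact Prod.ext h₂₂.symm h₁₂.symm

end Correspondence

theorem statement5_general
    (k : Type) [Field k]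
    (V H : Type) [AddCommGroup V] [Module k V] [AddCommGroup H] [Module k H]
    [FiniteDimensional k V] [FiniteDimensional k H]
    (hV : finrank k V = 4) (hH : finrank k H = 4)
    (ξ : Dual k H) (hξ : ξ ≠ 0)
    (H1 : Submodule k H) (hH1 : finrank k H1 = 1)
    (hcompl : IsCompl H1 (LinearMap.ker ξ)) :
    -- (i) for every pair (ω̄, α) there is a unique ω with ω̃ = Θ(ω̄,α), and
    --     this ω lies in the target set;
    (∀ (φb : LinearMap.ker ξ →ₗ[k] LinearMap.ker ξ →ₗ[k] V →ₗ[k] V →ₗ[k] k),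
      IsSymAlt φb →
      (∀ Wb : (LinearMap.ker ξ) ⊗[k] V →ₗ[k] Dual k ((LinearMap.ker ξ) ⊗[k] V),
        (∀ (x y : LinearMap.ker ξ) (v v' : V), Wb (x ⊗ₜ v) (y ⊗ₜ v') = φb x y v v') →
        Function.Bijective Wb) →
      ∀ (α : H1 →ₗ[k] LinearMap.ker ξ →ₗ[k] V →ₗ[k] V →ₗ[k] k),
        (∀ (a : H1) (x : LinearMap.ker ξ) (v : V), α a x v v = 0) →
        (∃! φ : H →ₗ[k] H →ₗ[k] V →ₗ[k] V →ₗ[k] k,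
          IsSymAlt φ ∧ Corresponds ξ H1 φb α φ) ∧
        (∀ φ : H →ₗ[k] H →ₗ[k] V →ₗ[k] V →ₗ[k] k,
          IsSymAlt φ → Corresponds ξ H1 φb α φ → InTargetSet ξ φ)) ∧
    -- (ii) every ω in the target set arises from a unique pair (ω̄, α).
    (∀ φ : H →ₗ[k] H →ₗ[k] V →ₗ[k] V →ₗ[k] k,
      IsSymAlt φ → InTargetSet ξ φ →
      ∃! p : (LinearMap.ker ξ →ₗ[k] LinearMap.ker ξ →ₗ[k] V →ₗ[k] V →ₗ[k] k) ×
             (H1 →ₗ[k] LinearMap.ker ξ →ₗ[k] V →ₗ[k] V →ₗ[k] k),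
        IsSymAlt p.1 ∧
        (∀ Wb : (LinearMap.ker ξ) ⊗[k] V →ₗ[k] Dual k ((LinearMap.ker ξ) ⊗[k] V),
          (∀ (x y : LinearMap.ker ξ) (v v' : V), Wb (x ⊗ₜ v) (y ⊗ₜ v') = p.1 x y v v') →
          Function.Bijective Wb) ∧
        (∀ (a : H1) (x : LinearMap.ker ξ) (v : V), p.2 a x v v = 0) ∧
        Corresponds ξ H1 p.1 p.2 φ) := by
  refine ⟨fun φb hφb hWb α hα => ?_, fun φ hφ hT => ?_⟩
  · replace hWb := (forall_imp_iff_inducedMap φb _).mp hWb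
    exact ⟨existsUnique_corresponds hcompl hH1 hφb hWb hα,
      fun φ _ hc => inTargetSet_of_corresponds hV hH hξ hH1 hcompl hWb hc⟩
  · simpa only [forall_imp_iff_inducedMap, LinearMap.IsAlt] using
      existsUnique_of_inTargetSet hV hH hξ hH1 hcompl hφ hT

/-- for `dim H = 4`, fixed `ξ ∈ H*∖{0}`, `H̄ = ker ξ` and a fixed
line `H₁` with `H = H₁ ⊕ H̄`, the assignment `(ω̄, α) ↦ ω` (where `ω̄` ranges
over tensors in `S²H̄*⊗Λ²V*` with bijective `ω̃̄`, `α` over bilinear maps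
`H₁×H̄ → Λ²V*`, and `ω` is the unique element of `S²H*⊗Λ²V*` with
`ω̃ = Θ(ω̄,α)`) is well defined and a bijection onto
`{ω : rank(ω) = 12 and Im(ω̃) ∩ (⟨ξ⟩⊗V*) = 0}`: the affine-bundle lemma for
`M̃(4,4)_ξ → M(3,6)`. -/
theorem statement5
    (k : Type) [Field k] [IsAlgClosed k] [CharZero k]
    (V H : Type) [AddCommGroup V] [Module k V] [AddCommGroup H] [Module k H]
    [FiniteDimensional k V] [FiniteDimensional k H]
    (hV : finrank k V = 4) (hH : finrank k H = 4)
    (ξ : Dual k H) (hξ : ξ ≠ 0)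
    (H1 : Submodule k H) (hH1 : finrank k H1 = 1)
    (hcompl : IsCompl H1 (LinearMap.ker ξ)) :
    -- (i) for every pair (ω̄, α) there is a unique ω with ω̃ = Θ(ω̄,α), and
    --     this ω lies in the target set;
    (∀ (φb : LinearMap.ker ξ →ₗ[k] LinearMap.ker ξ →ₗ[k] V →ₗ[k] V →ₗ[k] k),
      IsSymAlt φb →
      (∀ Wb : (LinearMap.ker ξ) ⊗[k] V →ₗ[k] Dual k ((LinearMap.ker ξ) ⊗[k] V),
        (∀ (x y : LinearMap.ker ξ) (v v' : V), Wb (x ⊗ₜ v) (y ⊗ₜ v') = φb x y v v') →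
        Function.Bijective Wb) →
      ∀ (α : H1 →ₗ[k] LinearMap.ker ξ →ₗ[k] V →ₗ[k] V →ₗ[k] k),
        (∀ (a : H1) (x : LinearMap.ker ξ) (v : V), α a x v v = 0) →
        (∃! φ : H →ₗ[k] H →ₗ[k] V →ₗ[k] V →ₗ[k] k,
          IsSymAlt φ ∧ Corresponds ξ H1 φb α φ) ∧
        (∀ φ : H →ₗ[k] H →ₗ[k] V →ₗ[k] V →ₗ[k] k,
          IsSymAlt φ → Corresponds ξ H1 φb α φ → InTargetSet ξ φ)) ∧
    -- (ii) every ω in the target set arises from a unique pair (ω̄, α).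
    (∀ φ : H →ₗ[k] H →ₗ[k] V →ₗ[k] V →ₗ[k] k,
      IsSymAlt φ → InTargetSet ξ φ →
      ∃! p : (LinearMap.ker ξ →ₗ[k] LinearMap.ker ξ →ₗ[k] V →ₗ[k] V →ₗ[k] k) ×
             (H1 →ₗ[k] LinearMap.ker ξ →ₗ[k] V →ₗ[k] V →ₗ[k] k),
        IsSymAlt p.1 ∧
        (∀ Wb : (LinearMap.ker ξ) ⊗[k] V →ₗ[k] Dual k ((LinearMap.ker ξ) ⊗[k] V),
          (∀ (x y : LinearMap.ker ξ) (v v' : V), Wb (x ⊗ₜ v) (y ⊗ₜ v') = p.1 x y v v') →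
          Function.Bijective Wb) ∧
        (∀ (a : H1) (x : LinearMap.ker ξ) (v : V), p.2 a x v v = 0) ∧
        Corresponds ξ H1 p.1 p.2 φ) :=
  statement5_general k V H hV hH ξ hξ H1 hH1 hcompl
end

section
/- Let L₁₁, L₁₂, L₂₁, L₂₂ ⊆ V be lines with L₁₁ ∩ L₁₂ = 0 and L₂₁ ∩ L₂₂ = 0. Suppose L₂₁ ∩ L₁₁ and L₂₂ ∩ L₁₁ are 1-dimensional, spanned by vectors x₁ and x₂ respectively with ⟨x₁⟩ ≠ ⟨x₂⟩, and suppose L₂₁ ∩ L₁₂ = 0 and L₂₂ ∩ L₁₂ = 0. Then the only quadratic form q ∈ S²V* vanishing on all four lines L₁₁, L₁₂, L₂₁, L₂₂ is q = 0. -/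
open Module

lemma polar_eq_zero_on {k V : Type} [Field k] [AddCommGroup V] [Module k V]
    (q : QuadraticForm k V) (L : Submodule k V) (hq : ∀ x ∈ L, q x = 0)
    {u v : V} (hu : u ∈ L) (hv : v ∈ L) : QuadraticMap.polar q u v = 0 := by
  simp [QuadraticMap.polar, hq _ hu, hq _ hv, hq _ (L.add_mem hu hv)]

/-- Let `L₁₁, L₁₂, L₂₁, L₂₂ ⊆ V` be lines with `L₁₁ ∩ L₁₂ = 0`
and `L₂₁ ∩ L₂₂ = 0`, such that `L₂₁ ∩ L₁₁` and `L₂₂ ∩ L₁₁` are 1-dimensional,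
spanned by `x₁` resp. `x₂` with `⟨x₁⟩ ≠ ⟨x₂⟩`, and `L₂₁ ∩ L₁₂ = L₂₂ ∩ L₁₂ = 0`.
Then the only quadratic form vanishing on all four lines is `0`. -/
theorem statement17
    (k V : Type) [Field k] [IsAlgClosed k] [CharZero k]
    [AddCommGroup V] [Module k V] [FiniteDimensional k V]
    (hV : finrank k V = 4)
    (L₁₁ L₁₂ L₂₁ L₂₂ : Submodule k V)
    (h11 : finrank k L₁₁ = 2) (h12 : finrank k L₁₂ = 2)
    (h21 : finrank k L₂₁ = 2) (h22 : finrank k L₂₂ = 2)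
    (hskew1 : L₁₁ ⊓ L₁₂ = ⊥) (hskew2 : L₂₁ ⊓ L₂₂ = ⊥)
    (x₁ x₂ : V) (hx₁ : x₁ ≠ 0) (hx₂ : x₂ ≠ 0)
    (hm1 : L₂₁ ⊓ L₁₁ = Submodule.span k {x₁})
    (hm2 : L₂₂ ⊓ L₁₁ = Submodule.span k {x₂})
    (hxx : Submodule.span k {x₁} ≠ Submodule.span k ({x₂} : Set V))
    (hn1 : L₂₁ ⊓ L₁₂ = ⊥) (hn2 : L₂₂ ⊓ L₁₂ = ⊥)
    (q : QuadraticForm k V)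
    (hq11 : ∀ x ∈ L₁₁, q x = 0) (hq12 : ∀ x ∈ L₁₂, q x = 0)
    (hq21 : ∀ x ∈ L₂₁, q x = 0) (hq22 : ∀ x ∈ L₂₂, q x = 0) :
    q = 0 := by
  -- basic memberships
  have hx₁m : x₁ ∈ L₂₁ ⊓ L₁₁ := by rw [hm1]; exact Submodule.mem_span_singleton_self x₁
  have hx₂m : x₂ ∈ L₂₂ ⊓ L₁₁ := by rw [hm2]; exact Submodule.mem_span_singleton_self x₂
  have hx₁21 : x₁ ∈ L₂₁ := hx₁m.1
  have hx₁11 : x₁ ∈ L₁₁ := hx₁m.2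
  have hx₂22 : x₂ ∈ L₂₂ := hx₂m.1
  have hx₂11 : x₂ ∈ L₁₁ := hx₂m.2
  -- x₁, x₂ linearly independent
  have hspan_eq : ∀ a b : V, a ≠ 0 → b ≠ 0 → a ∈ Submodule.span k {b} →
      Submodule.span k {a} = Submodule.span k {b} := by
    intro a b ha hb hab
    refine Submodule.eq_of_le_of_finrank_le ((Submodule.span_singleton_le_iff_mem a _).2 hab) ?_
    rw [finrank_span_singleton ha, finrank_span_singleton hb]
  have hindx : LinearIndependent k ![x₁, x₂] := by
    rw [LinearIndependent.pair_iff]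
    intro s t hst
    by_contra hc
    rcases not_and_or.1 hc with hs | ht
    · apply hxx
      apply hspan_eq _ _ hx₁ hx₂
      rw [Submodule.mem_span_singleton]
      refine ⟨s⁻¹ * (-t), ?_⟩
      have h1 : s • x₁ = (-t) • x₂ := by
        rw [neg_smul, eq_neg_iff_add_eq_zero]; exact hst
      rw [mul_smul, ← h1, smul_smul, inv_mul_cancel₀ hs, one_smul]
    · apply hxx
      symm
      apply hspan_eq _ _ hx₂ hx₁
      rw [Submodule.mem_span_singleton]
      refine ⟨t⁻¹ * (-s), ?_⟩
      have h1 : t • x₂ = (-s) • x₁ := by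
        rw [neg_smul, eq_neg_iff_add_eq_zero, add_comm]; exact hst
      rw [mul_smul, ← h1, smul_smul, inv_mul_cancel₀ ht, one_smul]
  -- L₁₁ = span {x₁, x₂}
  have hspan_pair : ∀ (a b : V) (L : Submodule k V), finrank k L = 2 →
      LinearIndependent k ![a, b] → a ∈ L → b ∈ L → L = Submodule.span k {a, b} := by
    intro a b L hL hind haL hbL
    refine (Submodule.eq_of_le_of_finrank_le ?_ ?_).symm
    · rw [Submodule.span_le]; rintro z (rfl | rfl) <;> simpa
    · have hr : Set.range ![a, b] = {a, b} := by
        simp [Matrix.range_cons, Matrix.range_empty, Set.pair_comm]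
      rw [hL, ← hr, finrank_span_eq_card hind]
      simp
  have hL11 : L₁₁ = Submodule.span k {x₁, x₂} := hspan_pair _ _ _ h11 hindx hx₁11 hx₂11
  -- V = L₁₁ ⊔ L₁₂
  have hsup : L₁₁ ⊔ L₁₂ = ⊤ := by
    apply Submodule.eq_top_of_finrank_eq
    have h := Submodule.finrank_sup_add_finrank_inf_eq L₁₁ L₁₂
    rw [hskew1, h11, h12] at h
    rw [hV]
    simpa using h
  -- pick w₁ ∈ L₂₁ \ L₁₁, w₂ ∈ L₂₂ \ L₁₁
  have hw1ex : ∃ w ∈ L₂₁, w ∉ L₁₁ := by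
    by_contra hc
    push_neg at hc
    have h : L₂₁ ⊓ L₁₁ = L₂₁ := inf_eq_left.2 hc
    rw [hm1] at h
    have h1 := finrank_span_singleton (K := k) hx₁
    rw [h, h21] at h1
    norm_num at h1
  obtain ⟨w₁, hw₁21, hw₁n⟩ := hw1ex
  have hw2ex : ∃ w ∈ L₂₂, w ∉ L₁₁ := by
    by_contra hc
    push_neg at hc
    have h : L₂₂ ⊓ L₁₁ = L₂₂ := inf_eq_left.2 hc
    rw [hm2] at h
    have h1 := finrank_span_singleton (K := k) hx₂
    rw [h, h22] at h1
    norm_num at h1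
  obtain ⟨w₂, hw₂22, hw₂n⟩ := hw2ex
  -- decompose w = a + y with a ∈ L₁₁, y ∈ L₁₂
  have hdec : ∀ w : V, ∃ a ∈ L₁₁, ∃ y ∈ L₁₂, w = a + y := by
    intro w
    have : w ∈ L₁₁ ⊔ L₁₂ := by rw [hsup]; trivial
    obtain ⟨a, ha, y, hy, h⟩ := Submodule.mem_sup.1 this
    exact ⟨a, ha, y, hy, h.symm⟩
  obtain ⟨a₁, ha₁, y₁, hy₁, hw₁eq⟩ := hdec w₁
  obtain ⟨a₂, ha₂, y₂, hy₂, hw₂eq⟩ := hdec w₂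
  have hy₁0 : y₁ ≠ 0 := by
    rintro rfl
    rw [add_zero] at hw₁eq
    exact hw₁n (hw₁eq ▸ ha₁)
  have hy₂0 : y₂ ≠ 0 := by
    rintro rfl
    rw [add_zero] at hw₂eq
    exact hw₂n (hw₂eq ▸ ha₂)
  obtain ⟨α₁, β₁, ha₁eq⟩ := Submodule.mem_span_pair.1 (hL11 ▸ ha₁)
  obtain ⟨α₂, β₂, ha₂eq⟩ := Submodule.mem_span_pair.1 (hL11 ▸ ha₂)
  -- β₁ ≠ 0, α₂ ≠ 0
  have hβ₁ : β₁ ≠ 0 := by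
    intro h0
    have hy : y₁ ∈ L₂₁ := by
      have he : y₁ = w₁ - α₁ • x₁ := by
        rw [hw₁eq, ← ha₁eq, h0, zero_smul, add_zero]; abel
      rw [he]
      exact L₂₁.sub_mem hw₁21 (L₂₁.smul_mem _ hx₁21)
    have : y₁ ∈ L₂₁ ⊓ L₁₂ := ⟨hy, hy₁⟩
    rw [hn1, Submodule.mem_bot] at this
    exact hy₁0 this
  have hα₂ : α₂ ≠ 0 := by
    intro h0
    have hy : y₂ ∈ L₂₂ := by
      have he : y₂ = w₂ - β₂ • x₂ := by
        rw [hw₂eq, ← ha₂eq, h0, zero_smul, zero_add]; abel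
      rw [he]
      exact L₂₂.sub_mem hw₂22 (L₂₂.smul_mem _ hx₂22)
    have : y₂ ∈ L₂₂ ⊓ L₁₂ := ⟨hy, hy₂⟩
    rw [hn2, Submodule.mem_bot] at this
    exact hy₂0 this
  -- y₁, y₂ linearly independent
  have hindy : LinearIndependent k ![y₁, y₂] := by
    rw [LinearIndependent.pair_iff]
    intro c₁ c₂ hrel
    have key : (c₁ • w₁ - (c₁ * α₁ + c₂ * α₂) • x₁)
        - (-(c₂ • w₂ - (c₁ * β₁ + c₂ * β₂) • x₂)) = c₁ • y₁ + c₂ • y₂ := by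
      rw [hw₁eq, hw₂eq, ← ha₁eq, ← ha₂eq]
      module
    rw [hrel, sub_eq_zero] at key
    have hz : c₁ • w₁ - (c₁ * α₁ + c₂ * α₂) • x₁ ∈ L₂₁ ⊓ L₂₂ := by
      constructor
      · exact L₂₁.sub_mem (L₂₁.smul_mem _ hw₁21) (L₂₁.smul_mem _ hx₁21)
      · rw [key]
        exact L₂₂.neg_mem (L₂₂.sub_mem (L₂₂.smul_mem _ hw₂22) (L₂₂.smul_mem _ hx₂22))
    rw [hskew2, Submodule.mem_bot, sub_eq_zero] at hz
    have h5 : c₁ • y₁ = (c₁ * α₁ + c₂ * α₂) • x₁ - c₁ • a₁ := by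
      rw [← hz, hw₁eq]; module
    have h6 : c₁ • y₁ ∈ L₁₁ ⊓ L₁₂ := by
      constructor
      · rw [h5]
        exact L₁₁.sub_mem (L₁₁.smul_mem _ hx₁11) (L₁₁.smul_mem _ ha₁)
      · exact L₁₂.smul_mem _ hy₁
    rw [hskew1, Submodule.mem_bot, smul_eq_zero] at h6
    have hc₁ : c₁ = 0 := h6.resolve_right hy₁0
    have hc₂ : c₂ = 0 := by
      rw [hc₁, zero_smul, zero_add, smul_eq_zero] at hrel
      exact hrel.resolve_right hy₂0
    exact ⟨hc₁, hc₂⟩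
  have hL12 : L₁₂ = Submodule.span k {y₁, y₂} := hspan_pair _ _ _ h12 hindy hy₁ hy₂
  -- polar vanishing facts
  have B11 : QuadraticMap.polar (⇑q) x₁ y₁ = 0 := by
    have h1 : QuadraticMap.polar (⇑q) x₁ w₁ = 0 := polar_eq_zero_on q L₂₁ hq21 hx₁21 hw₁21
    have h2 : QuadraticMap.polar (⇑q) x₁ a₁ = 0 := polar_eq_zero_on q L₁₁ hq11 hx₁11 ha₁
    rw [hw₁eq, QuadraticMap.polar_add_right, h2, zero_add] at h1
    exact h1
  have B22 : QuadraticMap.polar (⇑q) x₂ y₂ = 0 := by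
    have h1 : QuadraticMap.polar (⇑q) x₂ w₂ = 0 := polar_eq_zero_on q L₂₂ hq22 hx₂22 hw₂22
    have h2 : QuadraticMap.polar (⇑q) x₂ a₂ = 0 := polar_eq_zero_on q L₁₁ hq11 hx₂11 ha₂
    rw [hw₂eq, QuadraticMap.polar_add_right, h2, zero_add] at h1
    exact h1
  have B21 : QuadraticMap.polar (⇑q) x₂ y₁ = 0 := by
    have h1 : q w₁ = 0 := hq21 _ hw₁21
    rw [hw₁eq, QuadraticMap.map_add (⇑q) a₁ y₁] at h1
    rw [hq11 _ ha₁, hq12 _ hy₁, zero_add, zero_add] at h1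
    rw [← ha₁eq, QuadraticMap.polar_add_left, QuadraticMap.polar_smul_left,
      QuadraticMap.polar_smul_left] at h1
    have hx1y1 : QuadraticMap.polar (⇑q) x₁ y₁ = 0 := B11
    rw [hx1y1, smul_zero, zero_add, smul_eq_mul, mul_eq_zero] at h1
    exact h1.resolve_left hβ₁
  have B12 : QuadraticMap.polar (⇑q) x₁ y₂ = 0 := by
    have h1 : q w₂ = 0 := hq22 _ hw₂22
    rw [hw₂eq, QuadraticMap.map_add (⇑q) a₂ y₂] at h1
    rw [hq11 _ ha₂, hq12 _ hy₂, zero_add, zero_add] at h1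
    rw [← ha₂eq, QuadraticMap.polar_add_left, QuadraticMap.polar_smul_left,
      QuadraticMap.polar_smul_left] at h1
    have hx2y2 : QuadraticMap.polar (⇑q) x₂ y₂ = 0 := B22
    rw [hx2y2, smul_zero, add_zero, smul_eq_mul, mul_eq_zero] at h1
    exact h1.resolve_left hα₂
  -- conclude
  ext v
  have hv : v ∈ L₁₁ ⊔ L₁₂ := by rw [hsup]; trivial
  obtain ⟨u, hu, w, hw, huw⟩ := Submodule.mem_sup.1 hv
  obtain ⟨s, t, hueq⟩ := Submodule.mem_span_pair.1 (hL11 ▸ hu)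
  obtain ⟨s', t', hweq⟩ := Submodule.mem_span_pair.1 (hL12 ▸ hw)
  have hpol : QuadraticMap.polar (⇑q) u w = 0 := by
    rw [← hueq, ← hweq]
    simp only [QuadraticMap.polar_add_left, QuadraticMap.polar_add_right,
      QuadraticMap.polar_smul_left, QuadraticMap.polar_smul_right]
    rw [show QuadraticMap.polar (⇑q) x₁ y₁ = 0 from B11,
      show QuadraticMap.polar (⇑q) x₁ y₂ = 0 from B12,
      show QuadraticMap.polar (⇑q) x₂ y₁ = 0 from B21,
      show QuadraticMap.polar (⇑q) x₂ y₂ = 0 from B22]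
    simp
  have : q v = 0 := by
    rw [← huw, QuadraticMap.map_add (⇑q) u w, hq11 _ hu, hq12 _ hw, hpol]
    ring
  simpa using this
end
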